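/- arXiv:math/0001111 — 9 statements merged into one kernel-verified Lean document; each statement's English description precedes it below -/
import Mathlib

section
/- Let n ≥ 1 and let p(x) = x^{n+1} + Σ_{i=0}^{n−1} c_i x^i be a monic complex polynomial of degree n+1 with no x^n term and Σ_{i=0}^{n−1}|c_i| ≤ c; set C = 1 + c. Then there exist polynomials b_1,…,b_n, a_1,…,a_n ∈ ℂ[x] with deg b_i ≤ i and deg a_i ≤ n − 1 satisfying x^{i−1}·p(x) = b_i(x)·p′(x) + a_i(x) for each i = 1,…,n, such that the n×n complex matrices A and B defined by A_{ij} = (coefficient of x^{j−1} in a_i) and B_{ij} = (1/2)·δ_{ij} − (coefficient of x^{j−1} in b_i′) satisfy ‖A‖ + ‖B‖ ≤ n²·(1 + C + C² + ⋯ + C^{n+1}). -/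
open Polynomial Finset

/-- The ℓ¹-norm of a univariate complex polynomial: the sum of the absolute
values of all its coefficients. -/
noncomputable def l1 (p : Polynomial ℂ) : ℝ := ∑ i ∈ p.support, ‖p.coeff i‖

/-- The norm of a ν×ν complex matrix: the maximal ℓ¹-norm of a column,
`‖A‖ = max_j Σ_i |A_{ij}|`. -/
noncomputable def matNorm {ν : ℕ} (A : Fin ν → Fin ν → ℂ) : ℝ :=
  ⨆ j, ∑ i, ‖A i j‖

noncomputable def PF (n : ℕ) (q : Polynomial ℂ) : ℕ → Polynomial ℂ × Polynomial ℂ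
  | 0 => (Polynomial.C (((n : ℂ) + 1)⁻¹) * X,
          q - Polynomial.C (((n : ℂ) + 1)⁻¹) * (X * derivative q))
  | (k + 1) =>
      (X * (PF n q k).1 + Polynomial.C ((PF n q k).2.coeff (n - 1) * ((n : ℂ) + 1)⁻¹),
       X * (PF n q k).2 - Polynomial.C ((PF n q k).2.coeff (n - 1)) * X ^ n
         - Polynomial.C ((PF n q k).2.coeff (n - 1) * ((n : ℂ) + 1)⁻¹) * derivative q)

lemma abs_inv_n (n : ℕ) : ‖((n : ℂ) + 1)⁻¹‖ = ((n : ℝ) + 1)⁻¹ := by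
  rw [norm_inv]
  congr 1
  have : ((n : ℂ) + 1) = (((n : ℝ) + 1 : ℝ) : ℂ) := by push_cast; ring
  rw [this, Complex.norm_real, Real.norm_eq_abs, abs_of_nonneg (by positivity)]

lemma deriv_coeff_bound (n : ℕ) (q : Polynomial ℂ) (c : ℝ) (hc0 : 0 ≤ c)
    (hq : ∀ j, n ≤ j → q.coeff j = 0) (hqc : ∀ j, ‖q.coeff j‖ ≤ c) (j : ℕ) :
    ‖(derivative q).coeff j‖ ≤ (n : ℝ) * c := by
  rw [coeff_derivative]
  rcases le_or_gt n (j + 1) with h | h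
  · rw [hq _ h, zero_mul, norm_zero]
    positivity
  · rw [norm_mul]
    have h1 : ‖((j : ℂ) + 1)‖ = (j : ℝ) + 1 := by
      have : ((j : ℂ) + 1) = (((j : ℝ) + 1 : ℝ) : ℂ) := by push_cast; ring
      rw [this, Complex.norm_real, Real.norm_eq_abs, abs_of_nonneg (by positivity)]
    rw [h1]
    calc ‖q.coeff (j + 1)‖ * ((j : ℝ) + 1) ≤ c * (n : ℝ) := by
          apply mul_le_mul (hqc _) (by exact_mod_cast h.le) (by positivity) hc0
      _ = (n : ℝ) * c := mul_comm _ _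

lemma PF_a_coeff_zero (n : ℕ) (hn : 1 ≤ n) (q : Polynomial ℂ)
    (hq : ∀ j, n ≤ j → q.coeff j = 0) (k : ℕ) :
    ∀ j, n ≤ j → (PF n q k).2.coeff j = 0 := by
  induction k with
  | zero =>
      intro j hj
      obtain ⟨j', rfl⟩ : ∃ j', j = j' + 1 := ⟨j - 1, (Nat.succ_pred_eq_of_pos (hn.trans hj)).symm⟩
      simp only [PF, coeff_sub, coeff_C_mul, coeff_X_mul, coeff_derivative]
      rw [hq _ hj]
      ring
  | succ k ih =>
      intro j hj
      obtain ⟨j', rfl⟩ : ∃ j', j = j' + 1 := ⟨j - 1, (Nat.succ_pred_eq_of_pos (hn.trans hj)).symm⟩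
      have hd : (derivative q).coeff (j' + 1) = 0 := by
        rw [coeff_derivative, hq _ (hj.trans (Nat.le_succ _)), zero_mul]
      simp only [PF, coeff_sub, coeff_C_mul, coeff_X_mul, coeff_X_pow, hd, mul_zero, sub_zero]
      rcases eq_or_lt_of_le hj with h | h
      · rw [if_pos h.symm, mul_one]
        have : j' = n - 1 := by omega
        rw [this]
        ring
      · rw [if_neg (by omega), mul_zero, ih _ (by omega), sub_zero]

lemma PF_a_coeff_bound (n : ℕ) (hn : 1 ≤ n) (q : Polynomial ℂ) (c : ℝ) (hc0 : 0 ≤ c)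
    (hq : ∀ j, n ≤ j → q.coeff j = 0) (hqc : ∀ j, ‖q.coeff j‖ ≤ c) (k : ℕ) :
    ∀ j, ‖(PF n q k).2.coeff j‖ ≤ 2 * c * (1 + c) ^ k := by
  have hd := deriv_coeff_bound n q c hc0 hq hqc
  have hinv : ((n : ℝ) + 1)⁻¹ * ((n : ℝ) * c) ≤ c := by
    rw [inv_mul_le_iff₀ (by positivity)]
    nlinarith [Nat.cast_nonneg (α := ℝ) n]
  have key : ∀ z : ℂ, ∀ j, ‖z * ((n : ℂ) + 1)⁻¹ * (derivative q).coeff j‖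
      ≤ ‖z‖ * c := by
    intro z j
    rw [norm_mul, norm_mul, abs_inv_n, mul_assoc]
    refine mul_le_mul_of_nonneg_left ?_ (by positivity)
    exact le_trans (mul_le_mul_of_nonneg_left (hd j) (by positivity)) hinv
  induction k with
  | zero =>
      intro j
      simp only [PF, coeff_sub, coeff_C_mul, pow_zero, mul_one]
      refine le_trans (norm_sub_le _ _) ?_
      rcases j with _ | j'
      · simp only [mul_coeff_zero, coeff_X_zero, zero_mul, mul_zero, norm_zero, add_zero]
        linarith [hqc 0]
      · rw [coeff_X_mul, norm_mul, abs_inv_n]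
        have := le_trans (mul_le_mul_of_nonneg_left (hd j') (by positivity)) hinv
        linarith [hqc (j' + 1)]
  | succ k ih =>
      intro j
      rcases le_or_gt n j with h | h
      · rw [PF_a_coeff_zero n hn q hq (k + 1) j h, norm_zero]
        positivity
      · have hXn : ((X : Polynomial ℂ) ^ n).coeff j = 0 := by
          rw [coeff_X_pow, if_neg (by omega)]
        simp only [PF, coeff_sub, coeff_C_mul, hXn, mul_zero, sub_zero]
        refine le_trans (norm_sub_le _ _) ?_
        have h2 := key ((PF n q k).2.coeff (n - 1)) j
        have h3 : ‖(PF n q k).2.coeff (n - 1)‖ ≤ 2 * c * (1 + c) ^ k := ih _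
        have h4 : ‖(X * (PF n q k).2).coeff j‖ ≤ 2 * c * (1 + c) ^ k := by
          rcases j with _ | j'
          · simp only [mul_coeff_zero, coeff_X_zero, zero_mul, norm_zero]
            positivity
          · rw [coeff_X_mul]; exact ih _
        have h5 : ‖(PF n q k).2.coeff (n - 1)‖ * c ≤ 2 * c * (1 + c) ^ k * c :=
          mul_le_mul_of_nonneg_right h3 hc0
        have : (2 : ℝ) * c * (1 + c) ^ (k + 1) = 2 * c * (1 + c) ^ k + 2 * c * (1 + c) ^ k * c := by
          ring
        rw [this]
        linarith [le_trans h2 h5]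

lemma PF_b_coeff_bound (n : ℕ) (hn : 1 ≤ n) (q : Polynomial ℂ) (c : ℝ) (hc0 : 0 ≤ c)
    (hq : ∀ j, n ≤ j → q.coeff j = 0) (hqc : ∀ j, ‖q.coeff j‖ ≤ c) (k : ℕ) :
    ∀ j, ‖(PF n q k).1.coeff j‖ ≤ (1 + 2 * c * (1 + c) ^ k) * ((n : ℝ) + 1)⁻¹ := by
  have hmono : ∀ k : ℕ, (1 + c) ^ k ≤ (1 + c) ^ (k + 1) := by
    intro k
    rw [pow_succ]
    exact le_mul_of_one_le_right (by positivity) (by linarith)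
  induction k with
  | zero =>
      intro j
      simp only [PF, coeff_C_mul, coeff_X, pow_zero, mul_one]
      rw [norm_mul, abs_inv_n]
      rcases eq_or_ne (1 : ℕ) j with h | h
      · rw [if_pos h, norm_one, mul_one]
        calc ((n : ℝ) + 1)⁻¹ = 1 * ((n : ℝ) + 1)⁻¹ := (one_mul _).symm
          _ ≤ (1 + 2 * c) * ((n : ℝ) + 1)⁻¹ := by
              refine mul_le_mul_of_nonneg_right ?_ (by positivity)
              linarith
      · rw [if_neg h, norm_zero, mul_zero]
        positivity
  | succ k ih =>
      intro j
      have hb := PF_a_coeff_bound n hn q c hc0 hq hqc k (n - 1)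
      have hle : 2 * c * (1 + c) ^ k ≤ 1 + 2 * c * (1 + c) ^ (k + 1) := by
        have := hmono k
        nlinarith
      rcases j with _ | j'
      · simp only [PF, coeff_add, mul_coeff_zero, coeff_X_zero, zero_mul, zero_add, coeff_C_zero]
        rw [norm_mul, abs_inv_n]
        refine mul_le_mul_of_nonneg_right (le_trans hb ?_) (by positivity)
        linarith
      · simp only [PF, coeff_add, coeff_X_mul, coeff_C, if_neg (Nat.succ_ne_zero j'), add_zero]
        refine le_trans (ih j') (mul_le_mul_of_nonneg_right ?_ (by positivity))
        have := hmono k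
        nlinarith

lemma PF_deriv (n : ℕ) (q : Polynomial ℂ) :
    derivative (X ^ (n + 1) + q) = Polynomial.C ((n : ℂ) + 1) * X ^ n + derivative q := by
  rw [derivative_add, derivative_X_pow]
  push_cast
  ring_nf

lemma PF_id (n : ℕ) (q : Polynomial ℂ) (k : ℕ) :
    X ^ k * (X ^ (n + 1) + q) =
      (PF n q k).1 * derivative (X ^ (n + 1) + q) + (PF n q k).2 := by
  have h0 : ((n : ℂ) + 1) ≠ 0 := by
    exact_mod_cast Nat.cast_add_one_ne_zero (R := ℂ) n
  have hkey : (Polynomial.C (((n : ℂ) + 1)⁻¹) * Polynomial.C ((n : ℂ) + 1) : Polynomial ℂ) = 1 := by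
    rw [← Polynomial.C_mul, inv_mul_cancel₀ h0, Polynomial.C_1]
  rw [PF_deriv]
  induction k with
  | zero =>
      simp only [PF]
      linear_combination (-(X : Polynomial ℂ) ^ (n + 1)) * hkey
  | succ k ih =>
      simp only [PF, map_mul]
      linear_combination (X : Polynomial ℂ) * ih
        + (-(Polynomial.C ((PF n q k).2.coeff (n - 1)) * (X : Polynomial ℂ) ^ n)) * hkey

lemma PF_b_degree (n : ℕ) (q : Polynomial ℂ) (k : ℕ) :
    (PF n q k).1.degree ≤ (k : WithBot ℕ) + 1 := by
  induction k with
  | zero =>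
      simp only [PF]
      refine (degree_mul_le _ _).trans ?_
      refine le_trans (add_le_add degree_C_le degree_X_le) ?_
      simp
  | succ k ih =>
      simp only [PF]
      refine (degree_add_le _ _).trans (max_le ?_ (degree_C_le.trans (by
        exact_mod_cast Nat.zero_le (k + 2))))
      refine (degree_mul_le _ _).trans ?_
      refine le_trans (add_le_add degree_X_le ih) ?_
      push_cast
      ring_nf
      exact le_refl _

/-- For the hyperelliptic Hamiltonian `H = y²/2 + p(x)` with
`p = x^{n+1} + Σ_{i=0}^{n-1} cᵢ xⁱ`, `Σ|cᵢ| ≤ c`, `C = 1 + c`, there are divisions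
`x^{i-1}·p = bᵢ·p′ + aᵢ` (`deg bᵢ ≤ i`, `deg aᵢ ≤ n-1`, for `i = 1,…,n`,
indexed here by `i - 1 ∈ Fin n`) such that the matrices of the Picard–Fuchs
system `(t-A)·İ = B·I`, given by `A_{ij} = (aᵢ)_{j-1}` and
`B_{ij} = ½δ_{ij} − (bᵢ′)_{j-1}`, satisfy `‖A‖+‖B‖ ≤ n²(1 + C + ⋯ + C^{n+1})`. -/
theorem stmt1 (n : ℕ) (hn : 1 ≤ n) (cf : Fin n → ℂ) (c C : ℝ)
    (hc : ∑ i, ‖cf i‖ ≤ c) (hC : C = 1 + c)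
    (p : Polynomial ℂ)
    (hp : p = X ^ (n + 1) + ∑ i : Fin n, Polynomial.C (cf i) * X ^ (i : ℕ)) :
    ∃ b a : Fin n → Polynomial ℂ,
      (∀ i, (b i).degree ≤ (i : ℕ) + 1) ∧
      (∀ i, (a i).degree < n) ∧
      (∀ i : Fin n, X ^ (i : ℕ) * p = b i * derivative p + a i) ∧
      matNorm (fun i j => (a i).coeff j) +
        matNorm (fun i j =>
          (if i = j then (1 / 2 : ℂ) else 0) - (derivative (b i)).coeff j)
        ≤ (n : ℝ) ^ 2 * ∑ k ∈ range (n + 2), C ^ k := by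
  haveI : Nonempty (Fin n) := ⟨⟨0, hn⟩⟩
  set q : Polynomial ℂ := ∑ i : Fin n, Polynomial.C (cf i) * X ^ (i : ℕ) with hqdef
  have hc0 : 0 ≤ c := le_trans (Finset.sum_nonneg fun i _ => norm_nonneg _) hc
  have hq0 : ∀ j, n ≤ j → q.coeff j = 0 := by
    intro j hj
    rw [hqdef, finset_sum_coeff]
    refine Finset.sum_eq_zero fun i _ => ?_
    rw [coeff_C_mul, coeff_X_pow, if_neg (by omega), mul_zero]
  have hqc : ∀ j, ‖q.coeff j‖ ≤ c := by
    intro j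
    by_cases h : j < n
    · have hcoe : q.coeff j = cf ⟨j, h⟩ := by
        rw [hqdef, finset_sum_coeff]
        rw [Finset.sum_eq_single (⟨j, h⟩ : Fin n)]
        · simp [coeff_C_mul, coeff_X_pow]
        · intro i _ hne
          rw [coeff_C_mul, coeff_X_pow, if_neg, mul_zero]
          intro hji
          exact hne (Fin.ext hji.symm)
        · simp
      rw [hcoe]
      exact le_trans (Finset.single_le_sum (f := fun i => ‖cf i‖)
        (fun i _ => norm_nonneg _) (Finset.mem_univ _)) hc
    · rw [hq0 j (le_of_not_gt h), norm_zero]; exact hc0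
  have hinv1 : ((n : ℝ) + 1)⁻¹ * ((n : ℝ) + 1) = 1 := inv_mul_cancel₀ (by positivity)
  refine ⟨fun i => (PF n q i).1, fun i => (PF n q i).2, ?_, ?_, ?_, ?_⟩
  · intro i; exact PF_b_degree n q i
  · intro i; exact (degree_lt_iff_coeff_zero _ n).2 (PF_a_coeff_zero n hn q hq0 i)
  · intro i; rw [hp]; exact PF_id n q i
  · have hA : matNorm (fun i j : Fin n => (PF n q (i : ℕ)).2.coeff j)
        ≤ ∑ i : Fin n, 2 * c * (1 + c) ^ (i : ℕ) := by
      refine ciSup_le fun j => ?_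
      exact Finset.sum_le_sum fun i _ => PF_a_coeff_bound n hn q c hc0 hq0 hqc i j
    have hB : matNorm (fun i j : Fin n =>
          (if i = j then (1 / 2 : ℂ) else 0) - (derivative (PF n q (i : ℕ)).1).coeff j)
        ≤ 1 / 2 + ∑ i : Fin n, (1 + 2 * c * (1 + c) ^ (i : ℕ)) := by
      refine ciSup_le fun j => ?_
      have hterm : ∀ i : Fin n,
          ‖(if i = j then (1 / 2 : ℂ) else 0) - (derivative (PF n q (i : ℕ)).1).coeff j‖
          ≤ (if i = j then (1 / 2 : ℝ) else 0) + (1 + 2 * c * (1 + c) ^ (i : ℕ)) := by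
        intro i
        refine le_trans (norm_sub_le _ _) (add_le_add ?_ ?_)
        · split
          · rw [norm_div, norm_one, Complex.norm_two]
          · rw [norm_zero]
        · rw [coeff_derivative, norm_mul]
          have h1 : ‖((j : ℕ) : ℂ) + 1‖ = ((j : ℕ) : ℝ) + 1 := by
            have : (((j : ℕ) : ℂ) + 1) = ((((j : ℕ) : ℝ) + 1 : ℝ) : ℂ) := by push_cast; ring
            rw [this, Complex.norm_real, Real.norm_eq_abs, abs_of_nonneg (by positivity)]
          rw [h1]
          have hb := PF_b_coeff_bound n hn q c hc0 hq0 hqc i ((j : ℕ) + 1)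
          have hj1 : ((j : ℕ) : ℝ) + 1 ≤ (n : ℝ) + 1 := by
            have := j.isLt
            exact_mod_cast Nat.succ_le_succ (le_of_lt this)
          have hnn : (0 : ℝ) ≤ 1 + 2 * c * (1 + c) ^ (i : ℕ) := by positivity
          calc ‖(PF n q (i : ℕ)).1.coeff ((j : ℕ) + 1)‖ * (((j : ℕ) : ℝ) + 1)
              ≤ (1 + 2 * c * (1 + c) ^ (i : ℕ)) * ((n : ℝ) + 1)⁻¹ * ((n : ℝ) + 1) := by
                refine mul_le_mul hb hj1 (by positivity) (by positivity)
            _ = 1 + 2 * c * (1 + c) ^ (i : ℕ) := by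
                rw [mul_assoc, mul_comm (((n : ℝ) + 1)⁻¹), mul_inv_cancel₀ (by positivity), mul_one]
      calc (∑ i : Fin n, ‖(if i = j then (1 / 2 : ℂ) else 0)
              - (derivative (PF n q (i : ℕ)).1).coeff j‖)
          ≤ ∑ i : Fin n, ((if i = j then (1 / 2 : ℝ) else 0) + (1 + 2 * c * (1 + c) ^ (i : ℕ))) :=
            Finset.sum_le_sum fun i _ => hterm i
        _ = 1 / 2 + ∑ i : Fin n, (1 + 2 * c * (1 + c) ^ (i : ℕ)) := by
            rw [Finset.sum_add_distrib, Finset.sum_ite_eq' univ j (fun _ => (1 / 2 : ℝ)),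
              if_pos (Finset.mem_univ _)]
    refine le_trans (add_le_add hA hB) ?_
    have hfin : ∀ f : ℕ → ℝ, ∑ i : Fin n, f (i : ℕ) = ∑ i ∈ range n, f i := fun f =>
      Fin.sum_univ_eq_sum_range f n
    rw [hfin (fun i => 2 * c * (1 + c) ^ i), hfin (fun i => 1 + 2 * c * (1 + c) ^ i)]
    have hG : c * ∑ i ∈ range n, (1 + c) ^ i = (1 + c) ^ n - 1 := by
      have := geom_sum_mul (1 + c) n
      have h2 : (1 + c) - 1 = c := by ring
      rw [h2] at this
      linarith [this]
    have hsplit : ∑ i ∈ range n, (2 * c * (1 + c) ^ i) = 2 * ((1 + c) ^ n - 1) := by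
      rw [← hG, ← mul_assoc, Finset.mul_sum]
    have hsplit2 : ∑ i ∈ range n, (1 + 2 * c * (1 + c) ^ i) = (n : ℝ) + 2 * ((1 + c) ^ n - 1) := by
      rw [Finset.sum_add_distrib, Finset.sum_const, card_range, nsmul_eq_mul, mul_one, hsplit]
    rw [hsplit, hsplit2, hC]
    -- goal: 2*((1+c)^n - 1) + (1/2 + ((n:ℝ) + 2*((1+c)^n - 1))) ≤ n^2 * ∑ k in range (n+2), (1+c)^k
    have hC1 : (1 : ℝ) ≤ 1 + c := by linarith
    set D : ℝ := 1 + c with hD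
    have hCn1 : (1 : ℝ) ≤ D ^ n := one_le_pow₀ hC1
    rcases eq_or_lt_of_le hn with h1 | h2
    · subst hp
      have hn1 : n = 1 := h1.symm
      subst hn1
      rw [show (1 + 2 : ℕ) = 3 from rfl]
      simp only [Finset.sum_range_succ, Finset.sum_range_zero, pow_zero, pow_one, zero_add]
      push_cast
      nlinarith [sq_nonneg (D - 3 / 2)]
    · have hn2 : (2 : ℝ) ≤ (n : ℝ) := by exact_mod_cast h2
      have hlow : (n : ℝ) + 2 * D ^ n ≤ ∑ k ∈ range (n + 2), D ^ k := by
        rw [Finset.sum_range_succ, Finset.sum_range_succ]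
        have h3 : (n : ℝ) ≤ ∑ k ∈ range n, D ^ k := by
          calc (n : ℝ) = ∑ _k ∈ range n, (1 : ℝ) := by
                rw [Finset.sum_const, card_range, nsmul_eq_mul, mul_one]
            _ ≤ ∑ k ∈ range n, D ^ k := Finset.sum_le_sum fun k _ => one_le_pow₀ hC1
        have h4 : D ^ n ≤ D ^ (n + 1) := pow_le_pow_right₀ hC1 (Nat.le_succ n)
        linarith
      have h5 : (n : ℝ) ^ 2 * ((n : ℝ) + 2 * D ^ n) ≤ (n : ℝ) ^ 2 * ∑ k ∈ range (n + 2), D ^ k :=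
        mul_le_mul_of_nonneg_left hlow (by positivity)
      have e1 : (0 : ℝ) ≤ ((n : ℝ) ^ 2 - 4) * D ^ n :=
        mul_nonneg (by nlinarith [hn2]) (by positivity)
      nlinarith [e1, h5, hn2, hCn1]
end

section
/- Let p ∈ ℂ[x] be a monic polynomial of degree n+1 (n ≥ 1), and for each i = 1,…,n let a_i ∈ ℂ[x] with deg a_i ≤ n − 1 be the remainder of the division of x^{i−1}·p by p′, i.e. x^{i−1}·p = b_i·p′ + a_i for some b_i ∈ ℂ[x]. Define the n×n matrix A by A_{ij} = (coefficient of x^{j−1} in a_i). If x_* ∈ ℂ satisfies p′(x_*) = 0 and t_* = p(x_*), then the column vector v = (1, x_*, x_*², …, x_*^{n−1}) is an eigenvector of A with eigenvalue t_*: A·v = t_*·v. -/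
open Polynomial Finset

/-- Let `p` be monic of degree `n+1` and, for `i = 1,…,n`
(indexed here by `i - 1 ∈ Fin n`), let `x^{i-1}·p = bᵢ·p′ + aᵢ` with
`deg aᵢ ≤ n - 1`.  If `x₀` is a critical point of `p` with critical value
`t₀ = p(x₀)`, then the vector `v = (1, x₀, …, x₀^{n-1})` is an eigenvector of
the matrix `A_{ij} = (aᵢ)_{j-1}` with eigenvalue `t₀`, i.e. `A·v = t₀·v`
componentwise: `Σ_j (aᵢ)_{j-1} x₀^{j-1} = t₀ · x₀^{i-1}`. -/
theorem stmt2 (n : ℕ) (hn : 1 ≤ n) (p : Polynomial ℂ) (hmonic : p.Monic)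
    (hdeg : p.natDegree = n + 1)
    (b a : Fin n → Polynomial ℂ)
    (hdiv : ∀ i : Fin n, X ^ (i : ℕ) * p = b i * derivative p + a i)
    (hadeg : ∀ i, (a i).degree < n)
    (x₀ t₀ : ℂ) (hcrit : (derivative p).eval x₀ = 0) (ht : t₀ = p.eval x₀) :
    ∀ i : Fin n, ∑ j : Fin n, (a i).coeff j * x₀ ^ (j : ℕ) = t₀ * x₀ ^ (i : ℕ) := by
  intro i
  have hnd : (a i).natDegree < n := by
    rcases eq_or_ne (a i) 0 with h | h
    · simpa [h] using (show 0 < n by omega)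
    · exact natDegree_lt_iff_degree_lt h |>.mpr (by simpa using hadeg i)
  have heval : (a i).eval x₀ = t₀ * x₀ ^ (i : ℕ) := by
    have := congrArg (Polynomial.eval x₀) (hdiv i)
    simp [hcrit, ht] at this ⊢
    rw [← this]; ring
  rw [Fin.sum_univ_eq_sum_range (fun j => (a i).coeff j * x₀ ^ j)]
  rw [← Polynomial.eval_eq_sum_range' hnd]
  exact heval
end

section
/- Let p ∈ ℂ[x] be a monic polynomial of degree n+1 (n ≥ 1), and for each i = 1,…,n let b_i, a_i ∈ ℂ[x] be the quotient and remainder of the division of x^{i−1}·p by p′: x^{i−1}·p = b_i·p′ + a_i with deg a_i ≤ n − 1 (so deg b_i = i). Define the n×n matrix B by B_{ij} = (1/2)·δ_{ij} − (coefficient of x^{j−1} in b_i′). Then B is lower triangular, i.e. B_{ij} = 0 for all j > i, and its diagonal entries are B_{ii} = 1/2 − i/(n+1) for i = 1,…,n. -/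
open Polynomial

/-!
Dividing `X ^ i * p` (monic of degree `i + n + 1`) by `p′` (degree `n`, leading coefficient `n + 1`)
with a remainder of degree `< n` leaves the remainder out of the top coefficient, so the quotient
`bᵢ` has degree `i + 1` and leading coefficient `1 / (n + 1)`. Hence `bᵢ′` has degree `i`, which
makes `B` lower triangular, and its coefficient of `X ^ i` is `(i + 1) / (n + 1)`.
-/

namespace Polynomial

section DivisionWithRemainder

variable {R : Type*} [CommRing R] [NoZeroDivisors R] {f q b r : R[X]}

lemma leadingCoeff_mul_eq_of_eq_mul_add (hdiv : f = b * q + r) (hr : r.degree < f.degree) :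
    b.leadingCoeff * q.leadingCoeff = f.leadingCoeff := by
  rw [← leadingCoeff_mul, eq_sub_of_add_eq hdiv.symm, leadingCoeff_sub_of_degree_lt hr]

lemma natDegree_add_eq_of_eq_mul_add (hq : q ≠ 0) (hdiv : f = b * q + r)
    (hr : r.degree < f.degree) :
    b.natDegree + q.natDegree = f.natDegree := by
  have hbq : b * q = f - r := eq_sub_of_add_eq hdiv.symm
  have hsub : (f - r).natDegree = f.natDegree :=
    natDegree_eq_natDegree (degree_sub_eq_left_of_degree_lt hr)
  have hb : b ≠ 0 := by
    rintro rfl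
    rw [zero_mul, zero_add] at hdiv
    exact hr.ne (congrArg degree hdiv).symm
  rw [← natDegree_mul hb hq, hbq, hsub]

end DivisionWithRemainder

section QuotientByDerivative

variable {K : Type*} [Field K] [CharZero K] {n i : ℕ} {p b a : K[X]}

lemma natDegree_and_leadingCoeff_of_X_pow_mul_eq_mul_derivative_add (hmonic : p.Monic)
    (hdeg : p.natDegree = n + 1) (hdiv : X ^ i * p = b * derivative p + a)
    (ha : a.degree < n) :
    b.natDegree = i + 1 ∧ b.leadingCoeff = 1 / (n + 1) := by
  have hf : (X ^ i * p).Monic := (monic_X_pow i).mul hmonic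
  have hfdeg : (X ^ i * p).natDegree = i + (n + 1) := by
    rw [(monic_X_pow i).natDegree_mul hmonic, natDegree_X_pow, hdeg]
  have hn : (n + 1 : K) ≠ 0 := n.cast_add_one_ne_zero
  have hq : (derivative p).leadingCoeff = n + 1 := by
    rw [leadingCoeff_derivative, hmonic.leadingCoeff, hdeg]; push_cast; ring
  have hq0 : derivative p ≠ 0 := fun h => hn (by rw [← hq, h, leadingCoeff_zero])
  have ha' : a.degree < (X ^ i * p).degree := by
    rw [degree_eq_natDegree hf.ne_zero, hfdeg]
    exact ha.trans_le (by exact_mod_cast (by omega : n ≤ i + (n + 1)))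
  constructor
  · have := natDegree_add_eq_of_eq_mul_add hq0 hdiv ha'
    rw [natDegree_derivative, hdeg, hfdeg] at this
    omega
  · have := leadingCoeff_mul_eq_of_eq_mul_add hdiv ha'
    rw [hq, hf.leadingCoeff] at this
    exact eq_one_div_of_mul_eq_one_left this

end QuotientByDerivative

end Polynomial

theorem stmt3_general (n : ℕ) (p : Polynomial ℂ) (hmonic : p.Monic)
    (hdeg : p.natDegree = n + 1)
    (b a : Fin n → Polynomial ℂ)
    (hdiv : ∀ i : Fin n, X ^ (i : ℕ) * p = b i * derivative p + a i)
    (hadeg : ∀ i, (a i).degree < n) :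
    (∀ i j : Fin n, (i : ℕ) < (j : ℕ) →
      (if i = j then (1 / 2 : ℂ) else 0) - (derivative (b i)).coeff j = 0) ∧
    (∀ i : Fin n,
      (1 / 2 : ℂ) - (derivative (b i)).coeff i = 1 / 2 - ((i : ℕ) + 1) / (n + 1)) := by
  refine ⟨fun i j hij => ?_, fun i => ?_⟩ <;>
    obtain ⟨hbdeg, hblc⟩ :=
      natDegree_and_leadingCoeff_of_X_pow_mul_eq_mul_derivative_add hmonic hdeg (hdiv i)
        (hadeg i)
  · rw [if_neg (Fin.ne_of_lt hij), coeff_derivative,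
      coeff_eq_zero_of_natDegree_lt (by omega : (b i).natDegree < j + 1)]
    ring
  · rw [coeff_derivative, ← hbdeg, coeff_natDegree, hblc]
    ring

/-- Let `p` be monic of degree `n+1` and, for `i = 1,…,n`
(indexed here by `i - 1 ∈ Fin n`), let `x^{i-1}·p = bᵢ·p′ + aᵢ` be the division
with remainder, `deg aᵢ ≤ n - 1`.  Then the matrix
`B_{ij} = ½δ_{ij} − (bᵢ′)_{j-1}` is lower triangular (`B_{ij} = 0` for `j > i`)
with diagonal entries `B_{ii} = ½ − i/(n+1)`. -/
theorem stmt3 (n : ℕ) (hn : 1 ≤ n) (p : Polynomial ℂ) (hmonic : p.Monic)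
    (hdeg : p.natDegree = n + 1)
    (b a : Fin n → Polynomial ℂ)
    (hdiv : ∀ i : Fin n, X ^ (i : ℕ) * p = b i * derivative p + a i)
    (hadeg : ∀ i, (a i).degree < n) :
    (∀ i j : Fin n, (i : ℕ) < (j : ℕ) →
      (if i = j then (1 / 2 : ℂ) else 0) - (derivative (b i)).coeff j = 0) ∧
    (∀ i : Fin n,
      (1 / 2 : ℂ) - (derivative (b i)).coeff i = 1 / 2 - ((i : ℕ) + 1) / (n + 1)) :=
  stmt3_general n p hmonic hdeg b a hdiv hadeg
end

section
/- Let n ≥ 1 and let ξ = a·dx + b·dy be a polynomial 1-form with a, b ∈ ℂ[x,y] of degree ≤ n, whose principal homogeneous part ξ̂ = â·dx + b̂·dy (where â, b̂ are the degree-n homogeneous components of a, b) is normalized; set c = ‖a − â‖ + ‖b − b̂‖ and C = c + 1. Then for every d ≥ 2n and every polynomial F ∈ ℂ[x,y] with deg F ≤ d − 2, there exist u, v, r ∈ ℂ[x,y] with deg u ≤ d − n − 2, deg v ≤ d − n − 2 and deg r ≤ 2n − 2 such that F = a·v − b·u + r and ‖u‖ + ‖v‖ + ‖r‖ ≤ (1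 + C + C² + ⋯ + C^{d−2n})·‖F‖. -/
open MvPolynomial Finset

/-- The ℓ¹-norm of a bivariate complex polynomial: the sum of the absolute
values of all its coefficients. -/
noncomputable def l1mv (p : MvPolynomial (Fin 2) ℂ) : ℝ :=
  ∑ m ∈ p.support, ‖MvPolynomial.coeff m p‖

/-- A pair of homogeneous polynomials `a, b ∈ ℂ[x,y]` of degree `n` is
normalized if every homogeneous polynomial `f` of degree `2n - 1` can be
written `f = a·u + b·v` with homogeneous `u, v` of degree `n - 1` satisfying
`‖u‖ + ‖v‖ ≤ ‖f‖`. -/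
def NormalizedPair (n : ℕ) (a b : MvPolynomial (Fin 2) ℂ) : Prop :=
  a.IsHomogeneous n ∧ b.IsHomogeneous n ∧
    ∀ f : MvPolynomial (Fin 2) ℂ, f.IsHomogeneous (2 * n - 1) →
      ∃ u v : MvPolynomial (Fin 2) ℂ, u.IsHomogeneous (n - 1) ∧ v.IsHomogeneous (n - 1) ∧
        f = a * u + b * v ∧ l1mv u + l1mv v ≤ l1mv f

lemma l1mv_eq_sum {p : MvPolynomial (Fin 2) ℂ} {s : Finset ((Fin 2) →₀ ℕ)}
    (h : p.support ⊆ s) : l1mv p = ∑ m ∈ s, ‖coeff m p‖ :=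
  Finset.sum_subset h (fun m _ hm => by
    simp only [mem_support_iff, not_not] at hm; simp [hm])

lemma l1mv_nonneg (p : MvPolynomial (Fin 2) ℂ) : 0 ≤ l1mv p :=
  Finset.sum_nonneg fun _ _ => norm_nonneg _

@[simp] lemma l1mv_zero : l1mv (0 : MvPolynomial (Fin 2) ℂ) = 0 := by simp [l1mv]

lemma l1mv_neg (p : MvPolynomial (Fin 2) ℂ) : l1mv (-p) = l1mv p := by
  rw [l1mv, l1mv, MvPolynomial.support_neg]
  exact Finset.sum_congr rfl fun m _ => by simp

lemma l1mv_add_le (p q : MvPolynomial (Fin 2) ℂ) : l1mv (p + q) ≤ l1mv p + l1mv q := by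
  classical
  rw [l1mv_eq_sum (MvPolynomial.support_add (p := p) (q := q)),
    l1mv_eq_sum (Finset.subset_union_left (s₁ := p.support) (s₂ := q.support)),
    l1mv_eq_sum (Finset.subset_union_right (s₁ := p.support) (s₂ := q.support)),
    ← Finset.sum_add_distrib]
  exact Finset.sum_le_sum fun m _ => by simpa [coeff_add] using norm_add_le _ _

lemma l1mv_sub_le (p q : MvPolynomial (Fin 2) ℂ) : l1mv (p - q) ≤ l1mv p + l1mv q := by
  rw [sub_eq_add_neg]; simpa [l1mv_neg] using l1mv_add_le p (-q)

lemma l1mv_sum_le {ι : Type*} (s : Finset ι) (f : ι → MvPolynomial (Fin 2) ℂ) :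
    l1mv (∑ i ∈ s, f i) ≤ ∑ i ∈ s, l1mv (f i) := by
  classical
  induction s using Finset.induction with
  | empty => simp
  | insert _ _ h ih =>
    rw [Finset.sum_insert h, Finset.sum_insert h]
    exact (l1mv_add_le _ _).trans (by linarith)

lemma l1mv_monomial (s : Fin 2 →₀ ℕ) (c : ℂ) : l1mv (monomial s c) = ‖c‖ := by
  classical
  by_cases hc : c = 0 <;> simp [l1mv, support_monomial, hc, coeff_monomial]

lemma l1mv_monomial_mul (s : Fin 2 →₀ ℕ) (c : ℂ) (q : MvPolynomial (Fin 2) ℂ) :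
    l1mv (monomial s c * q) ≤ ‖c‖ * l1mv q := by
  classical
  have hsub : (monomial s c * q).support ⊆ q.support.image (s + ·) := by
    refine (MvPolynomial.support_mul _ _).trans ?_
    intro m hm
    rw [Finset.mem_add] at hm
    obtain ⟨i, hi, j, hj, rfl⟩ := hm
    have his : i = s := by
      by_cases hc : c = 0 <;> simp [support_monomial, hc] at hi
      exact hi
    subst his
    exact Finset.mem_image.2 ⟨j, hj, rfl⟩
  rw [l1mv_eq_sum hsub, Finset.sum_image (fun x _ y _ h => by simpa using h)]
  rw [l1mv, Finset.mul_sum]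
  exact Finset.sum_le_sum fun j _ => by rw [coeff_monomial_mul, norm_mul]

lemma l1mv_mul_le (p q : MvPolynomial (Fin 2) ℂ) : l1mv (p * q) ≤ l1mv p * l1mv q := by
  classical
  have hpq : p * q = ∑ v ∈ p.support, monomial v (coeff v p) * q := by
    rw [← Finset.sum_mul, support_sum_monomial_coeff]
  calc l1mv (p * q) = l1mv (∑ v ∈ p.support, monomial v (coeff v p) * q) := by rw [hpq]
    _ ≤ ∑ v ∈ p.support, l1mv (monomial v (coeff v p) * q) := l1mv_sum_le _ _
    _ ≤ ∑ v ∈ p.support, ‖coeff v p‖ * l1mv q :=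
        Finset.sum_le_sum fun v _ => l1mv_monomial_mul _ _ _
    _ = l1mv p * l1mv q := (Finset.sum_mul _ _ _).symm

lemma totalDegree_le_of_forall {p : MvPolynomial (Fin 2) ℂ} {d : ℕ}
    (h : ∀ m ∈ p.support, Finsupp.degree m ≤ d) : p.totalDegree ≤ d := by
  rw [MvPolynomial.totalDegree]
  exact Finset.sup_le fun m hm => by
    simpa [Finsupp.sum, Finsupp.degree_apply] using h m hm

lemma degree_le_totalDegree {p : MvPolynomial (Fin 2) ℂ} {m : Fin 2 →₀ ℕ}
    (h : m ∈ p.support) : Finsupp.degree m ≤ p.totalDegree := by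
  simpa [Finsupp.degree_apply, Finsupp.sum] using MvPolynomial.le_totalDegree h

lemma l1mv_homComp_add (k : ℕ) (p : MvPolynomial (Fin 2) ℂ) :
    l1mv (homogeneousComponent k p) + l1mv (p - homogeneousComponent k p) = l1mv p := by
  classical
  have h1 : l1mv (homogeneousComponent k p)
      = ∑ m ∈ p.support.filter (fun m => Finsupp.degree m = k), ‖coeff m p‖ := by
    rw [l1mv_eq_sum (s := p.support.filter (fun m => Finsupp.degree m = k)) ?_]
    · refine Finset.sum_congr rfl fun m hm => ?_
      rw [Finset.mem_filter] at hm
      rw [coeff_homogeneousComponent, if_pos hm.2]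
    · intro m hm
      rw [mem_support_iff, coeff_homogeneousComponent] at hm
      rw [Finset.mem_filter]
      by_cases hd : Finsupp.degree m = k
      · rw [if_pos hd] at hm; exact ⟨mem_support_iff.2 hm, hd⟩
      · rw [if_neg hd] at hm; exact absurd rfl hm
  have h2 : l1mv (p - homogeneousComponent k p)
      = ∑ m ∈ p.support.filter (fun m => ¬ Finsupp.degree m = k), ‖coeff m p‖ := by
    rw [l1mv_eq_sum (s := p.support.filter (fun m => ¬ Finsupp.degree m = k)) ?_]
    · refine Finset.sum_congr rfl fun m hm => ?_
      rw [Finset.mem_filter] at hm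
      rw [coeff_sub, coeff_homogeneousComponent, if_neg hm.2, sub_zero]
    · intro m hm
      rw [mem_support_iff, coeff_sub, coeff_homogeneousComponent] at hm
      rw [Finset.mem_filter]
      by_cases hd : Finsupp.degree m = k
      · rw [if_pos hd] at hm; simp at hm
      · rw [if_neg hd, sub_zero] at hm; exact ⟨mem_support_iff.2 hm, hd⟩
  rw [h1, h2, Finset.sum_filter_add_sum_filter_not]
  rfl

lemma l1mv_homComp_le (k : ℕ) (p : MvPolynomial (Fin 2) ℂ) :
    l1mv (homogeneousComponent k p) ≤ l1mv p := by
  have := l1mv_homComp_add k p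
  have := l1mv_nonneg (p - homogeneousComponent k p)
  linarith

lemma totalDegree_sub_homComp (k : ℕ) (p : MvPolynomial (Fin 2) ℂ) (hp : p.totalDegree ≤ k) :
    (p - homogeneousComponent k p).totalDegree ≤ k - 1 := by
  classical
  refine totalDegree_le_of_forall fun m hm => ?_
  rw [mem_support_iff, coeff_sub, coeff_homogeneousComponent] at hm
  by_cases hd : Finsupp.degree m = k
  · rw [if_pos hd] at hm; simp at hm
  · rw [if_neg hd, sub_zero] at hm
    have := degree_le_totalDegree (mem_support_iff.2 hm)
    omega

lemma degree_fin2 (s : Fin 2 →₀ ℕ) : Finsupp.degree s = s 0 + s 1 := by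
  rw [Finsupp.degree_apply,
    Finset.sum_subset (Finset.subset_univ s.support)
      (fun i _ hi => Finsupp.notMem_support_iff.mp hi),
    Fin.sum_univ_two]

lemma monomial_div (n : ℕ) (hn : 1 ≤ n) (A B : MvPolynomial (Fin 2) ℂ)
    (hnorm : NormalizedPair n A B) (m : ℕ) (hm : 2 * n - 1 ≤ m)
    (s : Fin 2 →₀ ℕ) (hs : Finsupp.degree s = m) (cc : ℂ) :
    ∃ p q : MvPolynomial (Fin 2) ℂ, p.IsHomogeneous (m - n) ∧ q.IsHomogeneous (m - n) ∧
      monomial s cc = A * p + B * q ∧ l1mv p + l1mv q ≤ ‖cc‖ := by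
  classical
  obtain ⟨hA, hB, hdiv⟩ := hnorm
  set i' : ℕ := min (s 0) (2 * n - 1) with hi'def
  set j' : ℕ := (2 * n - 1) - i' with hj'def
  have hs01 : s 0 + s 1 = m := by rw [← degree_fin2]; exact hs
  have hi' : i' ≤ s 0 := min_le_left _ _
  have hij : i' + j' = 2 * n - 1 := by omega
  have hj' : j' ≤ s 1 := by omega
  set s' : Fin 2 →₀ ℕ := Finsupp.single 0 i' + Finsupp.single 1 j' with hs'def
  set t : Fin 2 →₀ ℕ := Finsupp.single 0 (s 0 - i') + Finsupp.single 1 (s 1 - j') with htdef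
  have hts : t + s' = s := by
    ext x
    fin_cases x <;>
      simp [hs'def, htdef, Finsupp.single_apply] <;> omega
  have hs'deg : Finsupp.degree s' = 2 * n - 1 := by
    rw [degree_fin2]; simp [hs'def, Finsupp.single_apply]; omega
  have htdeg : Finsupp.degree t = m - (2 * n - 1) := by
    rw [degree_fin2]; simp [htdef, Finsupp.single_apply]; omega
  obtain ⟨u, v, hu, hv, heq, hle⟩ := hdiv (monomial s' cc) (isHomogeneous_monomial _ hs'deg)
  have hkey : (m - (2 * n - 1)) + (n - 1) = m - n := by omega
  refine ⟨monomial t 1 * u, monomial t 1 * v, ?_, ?_, ?_, ?_⟩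
  · exact hkey ▸ (isHomogeneous_monomial _ htdeg).mul hu
  · exact hkey ▸ (isHomogeneous_monomial _ htdeg).mul hv
  · have : monomial s cc = monomial t 1 * monomial s' cc := by
      rw [monomial_mul, one_mul, hts]
    rw [this, heq]; ring
  · calc l1mv (monomial t 1 * u) + l1mv (monomial t 1 * v)
        ≤ ‖(1:ℂ)‖ * l1mv u + ‖(1:ℂ)‖ * l1mv v :=
          add_le_add (l1mv_monomial_mul _ _ _) (l1mv_monomial_mul _ _ _)
      _ = l1mv u + l1mv v := by simp
      _ ≤ l1mv (monomial s' cc) := hle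
      _ = ‖cc‖ := l1mv_monomial _ _

lemma hom_div (n : ℕ) (hn : 1 ≤ n) (A B : MvPolynomial (Fin 2) ℂ)
    (hnorm : NormalizedPair n A B) (m : ℕ) (hm : 2 * n - 1 ≤ m)
    (f : MvPolynomial (Fin 2) ℂ) (hf : f.IsHomogeneous m) :
    ∃ p q : MvPolynomial (Fin 2) ℂ, p.IsHomogeneous (m - n) ∧ q.IsHomogeneous (m - n) ∧
      f = A * p + B * q ∧ l1mv p + l1mv q ≤ l1mv f := by
  classical
  have hdeg : ∀ s ∈ f.support, Finsupp.degree s = m := by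
    intro s hs
    rw [Finsupp.degree_eq_weight_one]
    exact hf (mem_support_iff.mp hs)
  choose p q hp hq heq hle using fun (s : f.support) =>
    monomial_div n hn A B hnorm m hm s.1 (hdeg s.1 s.2) (coeff s.1 f)
  refine ⟨∑ s ∈ f.support.attach, p s, ∑ s ∈ f.support.attach, q s, ?_, ?_, ?_, ?_⟩
  · exact IsHomogeneous.sum _ _ _ fun s _ => hp s
  · exact IsHomogeneous.sum _ _ _ fun s _ => hq s
  · rw [Finset.mul_sum, Finset.mul_sum, ← Finset.sum_add_distrib]
    conv_lhs => rw [f.as_sum, ← Finset.sum_attach f.support (fun s => monomial s (coeff s f))]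
    exact Finset.sum_congr rfl fun s _ => heq s
  · calc l1mv (∑ s ∈ f.support.attach, p s) + l1mv (∑ s ∈ f.support.attach, q s)
        ≤ (∑ s ∈ f.support.attach, l1mv (p s)) + ∑ s ∈ f.support.attach, l1mv (q s) :=
          add_le_add (l1mv_sum_le _ _) (l1mv_sum_le _ _)
      _ = ∑ s ∈ f.support.attach, (l1mv (p s) + l1mv (q s)) := (Finset.sum_add_distrib).symm
      _ ≤ ∑ s ∈ f.support.attach, ‖coeff s.1 f‖ := Finset.sum_le_sum fun s _ => hle s
      _ = l1mv f := by rw [l1mv, ← Finset.sum_attach f.support (fun s => ‖coeff s f‖)]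

lemma arith_key (S cc t FN : ℝ) (hS1 : 1 ≤ S) (hc0 : 0 ≤ cc) (ht0 : 0 ≤ t)
    (htF : t ≤ FN) :
    t + S * ((FN - t) + cc * t) ≤ ((cc + 1) * S + 1) * FN := by
  nlinarith [mul_nonneg (mul_nonneg (by linarith : (0:ℝ) ≤ S) hc0) (sub_nonneg.2 htF),
    mul_nonneg (sub_nonneg.2 hS1) ht0, mul_nonneg hc0 ht0]

lemma stmt4_aux (n : ℕ) (hn : 1 ≤ n) (a b : MvPolynomial (Fin 2) ℂ)
    (ha : a.totalDegree ≤ n) (hb : b.totalDegree ≤ n)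
    (hnorm : NormalizedPair n (homogeneousComponent n a) (homogeneousComponent n b))
    (c C : ℝ)
    (hc : c = l1mv (a - homogeneousComponent n a) + l1mv (b - homogeneousComponent n b))
    (hC : C = c + 1) :
    ∀ e : ℕ, ∀ F : MvPolynomial (Fin 2) ℂ, F.totalDegree ≤ 2 * n + e - 2 →
    ∃ u v r : MvPolynomial (Fin 2) ℂ,
      u.totalDegree ≤ 2 * n + e - n - 2 ∧ v.totalDegree ≤ 2 * n + e - n - 2 ∧
      r.totalDegree ≤ 2 * n - 2 ∧
      F = a * v - b * u + r ∧
      l1mv u + l1mv v + l1mv r ≤ (∑ k ∈ range (e + 1), C ^ k) * l1mv F := by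
  have hc0 : 0 ≤ c := by
    rw [hc]; exact add_nonneg (l1mv_nonneg _) (l1mv_nonneg _)
  have hC1 : 1 ≤ C := by rw [hC]; linarith
  intro e
  induction e with
  | zero =>
    intro F hF
    refine ⟨0, 0, F, by simp, by simp, by simpa using hF, by simp, ?_⟩
    simp [l1mv_nonneg F]
  | succ e ih =>
    intro F hF
    set k : ℕ := 2 * n + e - 1 with hk
    have hFk : F.totalDegree ≤ k := by omega
    set f := homogeneousComponent k F with hf
    have hfhom : f.IsHomogeneous k := homogeneousComponent_isHomogeneous k F
    obtain ⟨p, q, hp, hq, heq, hle⟩ :=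
      hom_div n hn _ _ hnorm k (by omega) f hfhom
    set F' := F - (a * p + b * q) with hF'
    have haa : (a - homogeneousComponent n a).totalDegree ≤ n - 1 :=
      totalDegree_sub_homComp n a ha
    have hbb : (b - homogeneousComponent n b).totalDegree ≤ n - 1 :=
      totalDegree_sub_homComp n b hb
    have hpd : p.totalDegree ≤ k - n := hp.totalDegree_le
    have hqd : q.totalDegree ≤ k - n := hq.totalDegree_le
    have hF'alt : F' = (F - f) -
        ((a - homogeneousComponent n a) * p + (b - homogeneousComponent n b) * q) := by
      rw [hF', heq]; ring
    have hF'deg : F'.totalDegree ≤ 2 * n + e - 2 := by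
      rw [hF'alt]
      refine (totalDegree_sub _ _).trans (max_le ?_ ?_)
      · exact (totalDegree_sub_homComp k F hFk).trans (by omega)
      · refine (totalDegree_add _ _).trans (max_le ?_ ?_)
        · exact (totalDegree_mul _ _).trans (by omega)
        · exact (totalDegree_mul _ _).trans (by omega)
    obtain ⟨u₁, v₁, r, hu₁, hv₁, hr, heq₁, hle₁⟩ := ih F' hF'deg
    refine ⟨u₁ - q, v₁ + p, r, ?_, ?_, hr, ?_, ?_⟩
    · exact (totalDegree_sub _ _).trans (max_le (by omega) (by omega))
    · exact (totalDegree_add _ _).trans (max_le (by omega) (by omega))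
    · have hFeq : F = F' + (a * p + b * q) := by rw [hF']; ring
      rw [hFeq, heq₁]; ring
    · -- norm estimates
      set S : ℝ := ∑ k ∈ range (e + 1), C ^ k with hS
      have hS1 : 1 ≤ S := by
        rw [hS]
        calc (1:ℝ) = ∑ k ∈ range 1, C ^ k := by simp
          _ ≤ _ := Finset.sum_le_sum_of_subset_of_nonneg
              (Finset.range_subset_range.2 (by omega))
              (fun i _ _ => by positivity)
      have hsplit : l1mv f + l1mv (F - f) = l1mv F := l1mv_homComp_add k F
      have hfF : l1mv f ≤ l1mv F := l1mv_homComp_le k F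
      have hF'le : l1mv F' ≤ (l1mv F - l1mv f) + c * l1mv f := by
        rw [hF'alt, hc]
        have h1 : l1mv ((a - homogeneousComponent n a) * p) ≤
            l1mv (a - homogeneousComponent n a) * l1mv p := l1mv_mul_le _ _
        have h2 : l1mv ((b - homogeneousComponent n b) * q) ≤
            l1mv (b - homogeneousComponent n b) * l1mv q := l1mv_mul_le _ _
        have h3 := l1mv_sub_le (F - f)
          ((a - homogeneousComponent n a) * p + (b - homogeneousComponent n b) * q)
        have h4 := l1mv_add_le ((a - homogeneousComponent n a) * p)
          ((b - homogeneousComponent n b) * q)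
        have hA0 := l1mv_nonneg (a - homogeneousComponent n a)
        have hB0 := l1mv_nonneg (b - homogeneousComponent n b)
        have hp0 := l1mv_nonneg p
        have hq0 := l1mv_nonneg q
        nlinarith [mul_nonneg hA0 hq0, mul_nonneg hB0 hp0]
      have hgoalS : ∑ j ∈ range (e + 1 + 1), C ^ j = C * S + 1 := by
        rw [hS, geom_sum_succ]
      rw [hgoalS]
      have hu : l1mv (u₁ - q) ≤ l1mv u₁ + l1mv q := l1mv_sub_le _ _
      have hv : l1mv (v₁ + p) ≤ l1mv v₁ + l1mv p := l1mv_add_le _ _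
      have hF0 := l1mv_nonneg F
      have hf0 := l1mv_nonneg f
      have hF'0 := l1mv_nonneg F'
      have hr0 := l1mv_nonneg r
      have hu₁0 := l1mv_nonneg u₁
      have hv₁0 := l1mv_nonneg v₁
      -- total ≤ (l1mv p + l1mv q) + (l1mv u₁ + l1mv v₁ + l1mv r)
      --       ≤ l1mv f + S * l1mv F'
      have key : l1mv f + S * l1mv F' ≤ (C * S + 1) * l1mv F := by
        have h5 : S * l1mv F' ≤ S * ((l1mv F - l1mv f) + c * l1mv f) :=
          mul_le_mul_of_nonneg_left hF'le (by linarith)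
        have h7 := arith_key S c (l1mv f) (l1mv F) hS1 hc0 hf0 hfF
        rw [hC]
        linarith
      have h6 : l1mv u₁ + l1mv v₁ + l1mv r ≤ S * l1mv F' := hle₁
      linarith

/-- Lemma on bounded division.  Let `ξ = a·dx + b·dy` be a
polynomial 1-form of degree `n + 1` (i.e. `deg a, deg b ≤ n`) normalized at
infinity: its principal homogeneous part `ξ̂ = â·dx + b̂·dy` is normalized.
With `c = ‖a - â‖ + ‖b - b̂‖` and `C = c + 1`, every 2-form
`Ω = F·dx∧dy` of degree `≤ d` (`d ≥ 2n`, i.e. `deg F ≤ d - 2`) can be divided,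
`Ω = ξ∧η + Θ`, i.e. `F = a·v - b·u + r` with `η = u·dx + v·dy` of degree
`≤ d - n - 1` and remainder `Θ = r·dx∧dy` of degree `≤ 2n`, such that
`‖u‖ + ‖v‖ + ‖r‖ ≤ (1 + C + ⋯ + C^{d-2n})·‖F‖`. -/
theorem stmt4 (n : ℕ) (hn : 1 ≤ n) (a b : MvPolynomial (Fin 2) ℂ)
    (ha : a.totalDegree ≤ n) (hb : b.totalDegree ≤ n)
    (hnorm : NormalizedPair n (homogeneousComponent n a) (homogeneousComponent n b))
    (c C : ℝ)
    (hc : c = l1mv (a - homogeneousComponent n a) + l1mv (b - homogeneousComponent n b))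
    (hC : C = c + 1)
    (d : ℕ) (hd : 2 * n ≤ d)
    (F : MvPolynomial (Fin 2) ℂ) (hF : F.totalDegree ≤ d - 2) :
    ∃ u v r : MvPolynomial (Fin 2) ℂ,
      u.totalDegree ≤ d - n - 2 ∧ v.totalDegree ≤ d - n - 2 ∧
      r.totalDegree ≤ 2 * n - 2 ∧
      F = a * v - b * u + r ∧
      l1mv u + l1mv v + l1mv r ≤ (∑ k ∈ range (d - 2 * n + 1), C ^ k) * l1mv F := by
  obtain ⟨u, v, r, hu, hv, hr, heq, hle⟩ :=
    stmt4_aux n hn a b ha hb hnorm c C hc hC (d - 2 * n) F (by omega)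
  have h1 : 2 * n + (d - 2 * n) - n - 2 = d - n - 2 := by omega
  have h2 : d - 2 * n + 1 = d - 2 * n + 1 := rfl
  exact ⟨u, v, r, by omega, by omega, hr, heq, hle⟩
end

section
/- Let n ≥ 1 and let H ∈ ℂ[x,y] be a balanced polynomial of degree n+1. Let m_1, …, m_ν be the ν = n(2n−1) monomials x^k y^l with k + l ≤ 2n − 2. Then there exist complex ν×ν matrices A, B with ‖A‖ + ‖B‖ ≤ 6n(n+1)^{n+1}, and for each i = 1,…,ν polynomials u_i, v_i ∈ ℂ[x,y], such that for every i: H·m_i = H_x·v_i − H_y·u_i + Σ_{j=1}^{ν} A_{ij}·m_j and ∂v_i/∂x − ∂u_i/∂y = Σ_{j=1}^{ν} B_{ij}·m_j. -/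
open MvPolynomial Finset

/-- A polynomial `H` of degree `n+1` is quasimonic (normalized at infinity) if
the pair of partial derivatives of its principal homogeneous part `Ĥ` is
normalized. -/
def Quasimonic (n : ℕ) (H : MvPolynomial (Fin 2) ℂ) : Prop :=
  NormalizedPair n (pderiv 0 (homogeneousComponent (n + 1) H))
    (pderiv 1 (homogeneousComponent (n + 1) H))

/-- A polynomial `H` of degree `n+1` is balanced if it is quasimonic and
`‖H − Ĥ‖ ≤ 1`. -/
def IsBalanced (n : ℕ) (H : MvPolynomial (Fin 2) ℂ) : Prop :=
  Quasimonic n H ∧ l1mv (H - homogeneousComponent (n + 1) H) ≤ 1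

namespace PF
lemma fin2_degree (d : Fin 2 →₀ ℕ) : d.degree = d 0 + d 1 := by
  rw [Finsupp.degree_apply]
  rw [Finset.sum_subset (Finset.subset_univ d.support)]
  · simp [Fin.sum_univ_two]
  · intro x _ hx
    simpa using Finsupp.notMem_support_iff.mp hx

lemma fin2_eq (d : Fin 2 →₀ ℕ) : d = Finsupp.single 0 (d 0) + Finsupp.single 1 (d 1) := by
  ext i
  fin_cases i <;> simp

lemma fin2_sum (d : Fin 2 →₀ ℕ) : (d.sum fun _ e => e) = d 0 + d 1 := by
  rw [Finsupp.sum]; exact fin2_degree d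




lemma l1mv_eq_sum {p : MvPolynomial (Fin 2) ℂ} {S : Finset (Fin 2 →₀ ℕ)}
    (h : p.support ⊆ S) : l1mv p = ∑ m ∈ S, ‖coeff m p‖ := by
  refine Finset.sum_subset h ?_
  intro x _ hx
  simp [MvPolynomial.notMem_support_iff.mp hx]

lemma l1mv_nonneg (p : MvPolynomial (Fin 2) ℂ) : 0 ≤ l1mv p :=
  Finset.sum_nonneg fun _ _ => norm_nonneg _

lemma abs_coeff_le_l1mv (p : MvPolynomial (Fin 2) ℂ) (d : Fin 2 →₀ ℕ) :
    ‖coeff d p‖ ≤ l1mv p := by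
  by_cases h : d ∈ p.support
  · exact Finset.single_le_sum (f := fun m => ‖coeff m p‖)
      (fun _ _ => norm_nonneg _) h
  · simp [MvPolynomial.notMem_support_iff.mp h, l1mv_nonneg]

lemma l1mv_smul (c : ℂ) (p : MvPolynomial (Fin 2) ℂ) :
    l1mv (c • p) = ‖c‖ * l1mv p := by
  rw [l1mv_eq_sum (p := c • p) (S := p.support) (Finsupp.support_smul), l1mv,
    Finset.mul_sum]
  refine Finset.sum_congr rfl fun m _ => ?_
  rw [MvPolynomial.coeff_smul, smul_eq_mul, norm_mul]

lemma l1mv_monomial (d : Fin 2 →₀ ℕ) (c : ℂ) : l1mv (monomial d c) = ‖c‖ := by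
  classical
  by_cases h : c = 0
  · simp [h, l1mv]
  · rw [l1mv, support_monomial, if_neg h, Finset.sum_singleton, coeff_monomial, if_pos rfl]

lemma l1mv_add_le (p q : MvPolynomial (Fin 2) ℂ) : l1mv (p + q) ≤ l1mv p + l1mv q := by
  classical
  set S := p.support ∪ q.support ∪ (p+q).support with hS
  rw [l1mv_eq_sum (p := p+q) (S := S) (by intro x hx; simp [hS, hx]),
      l1mv_eq_sum (p := p) (S := S) (by intro x hx; simp [hS, hx]),
      l1mv_eq_sum (p := q) (S := S) (by intro x hx; simp [hS, hx]), ← Finset.sum_add_distrib]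
  refine Finset.sum_le_sum fun m _ => ?_
  rw [coeff_add]
  exact norm_add_le _ _

lemma l1mv_sum_le {ι : Type*} (s : Finset ι) (f : ι → MvPolynomial (Fin 2) ℂ) :
    l1mv (∑ i ∈ s, f i) ≤ ∑ i ∈ s, l1mv (f i) := by
  classical
  induction s using Finset.induction with
  | empty => simp [l1mv]
  | insert _ _ h ih =>
    rw [Finset.sum_insert h, Finset.sum_insert h]
    exact (l1mv_add_le _ _).trans (by linarith)

lemma l1mv_neg (p : MvPolynomial (Fin 2) ℂ) : l1mv (-p) = l1mv p := by
  have : -p = (-1 : ℂ) • p := by simp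
  rw [this, l1mv_smul]; simp

lemma l1mv_sub_le (p q : MvPolynomial (Fin 2) ℂ) : l1mv (p - q) ≤ l1mv p + l1mv q := by
  rw [sub_eq_add_neg]
  exact (l1mv_add_le _ _).trans (by rw [l1mv_neg])

lemma l1mv_mul_monomial (p : MvPolynomial (Fin 2) ℂ) (e : Fin 2 →₀ ℕ) :
    l1mv (p * monomial e 1) = l1mv p := by
  classical
  have hsub : (p * monomial e 1).support ⊆ p.support.image (· + e) := by
    intro d hd
    have h := MvPolynomial.mem_support_iff.mp hd
    rw [coeff_mul_monomial'] at h
    by_cases he : e ≤ d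
    · rw [if_pos he, mul_one] at h
      exact Finset.mem_image.mpr ⟨d - e, MvPolynomial.mem_support_iff.mpr h, by
        rwa [tsub_add_cancel_of_le]⟩
    · rw [if_neg he] at h; exact absurd rfl h
  rw [l1mv_eq_sum hsub, Finset.sum_image (by intro a _ b _ h; exact add_right_cancel h)]
  refine Finset.sum_congr rfl fun d _ => ?_
  rw [coeff_mul_monomial, mul_one]

lemma l1mv_mul_le (p q : MvPolynomial (Fin 2) ℂ) : l1mv (p * q) ≤ l1mv p * l1mv q := by
  classical
  conv_lhs => rw [q.as_sum]
  rw [Finset.mul_sum]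
  refine (l1mv_sum_le _ _).trans (le_of_eq ?_)
  have : ∀ d ∈ q.support, l1mv (p * monomial d (coeff d q))
      = ‖coeff d q‖ * l1mv p := by
    intro d _
    have h1 : monomial d (coeff d q) = (coeff d q) • monomial d (1:ℂ) := by
      rw [smul_monomial, smul_eq_mul, mul_one]
    rw [h1, mul_smul_comm, l1mv_smul, l1mv_mul_monomial]
  rw [Finset.sum_congr rfl this, ← Finset.sum_mul, ← l1mv, mul_comm]

lemma l1mv_split (p q : MvPolynomial (Fin 2) ℂ)
    (h : ∀ d, coeff d p = 0 ∨ coeff d q = 0) :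
    l1mv (p + q) = l1mv p + l1mv q := by
  classical
  set S := p.support ∪ q.support ∪ (p+q).support with hS
  rw [l1mv_eq_sum (p := p+q) (S := S) (by intro x hx; simp [hS, hx]),
      l1mv_eq_sum (p := p) (S := S) (by intro x hx; simp [hS, hx]),
      l1mv_eq_sum (p := q) (S := S) (by intro x hx; simp [hS, hx]), ← Finset.sum_add_distrib]
  refine Finset.sum_congr rfl fun m _ => ?_
  rw [coeff_add]
  rcases h m with h' | h' <;> simp [h']


/-- derivative as explicit sum of monomials -/
lemma pderiv_as_sum (i : Fin 2) (p : MvPolynomial (Fin 2) ℂ) :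
    pderiv i p = ∑ d ∈ p.support,
      monomial (d - Finsupp.single i 1) (coeff d p * d i) := by
  conv_lhs => rw [p.as_sum, map_sum]
  exact Finset.sum_congr rfl fun d _ => pderiv_monomial

lemma l1mv_pderiv_pair (p : MvPolynomial (Fin 2) ℂ) {D : ℕ} (h : p.totalDegree ≤ D) :
    l1mv (pderiv 0 p) + l1mv (pderiv 1 p) ≤ D * l1mv p := by
  have key : ∀ i : Fin 2, l1mv (pderiv i p) ≤ ∑ d ∈ p.support,
      ‖coeff d p‖ * (d i : ℝ) := by
    intro i
    rw [pderiv_as_sum i p]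
    refine (l1mv_sum_le _ _).trans (le_of_eq (Finset.sum_congr rfl fun d _ => ?_))
    rw [l1mv_monomial, norm_mul, Complex.norm_natCast]
  calc l1mv (pderiv 0 p) + l1mv (pderiv 1 p)
      ≤ ∑ d ∈ p.support, ‖coeff d p‖ * ((d 0 : ℝ) + (d 1 : ℝ)) := by
        rw [show ∀ s : Finset (Fin 2 →₀ ℕ), ∀ g : (Fin 2 →₀ ℕ) → ℝ,
          (∑ d ∈ s, g d * ((d 0 : ℝ) + (d 1:ℝ)))
            = (∑ d ∈ s, g d * (d 0:ℝ)) + ∑ d ∈ s, g d * (d 1:ℝ) from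
          fun s g => by rw [← Finset.sum_add_distrib]; exact Finset.sum_congr rfl fun d _ => by ring]
        exact add_le_add (key 0) (key 1)
    _ ≤ ∑ d ∈ p.support, ‖coeff d p‖ * (D : ℝ) := by
        refine Finset.sum_le_sum fun d hd => ?_
        refine mul_le_mul_of_nonneg_left ?_ (norm_nonneg _)
        have := le_totalDegree hd
        rw [fin2_sum] at this
        exact_mod_cast (this.trans h)
    _ = D * l1mv p := by rw [← Finset.sum_mul, ← l1mv, mul_comm]

lemma l1mv_pderiv_le (i : Fin 2) (p : MvPolynomial (Fin 2) ℂ) {D : ℕ}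
    (h : p.totalDegree ≤ D) : l1mv (pderiv i p) ≤ D * l1mv p := by
  have := l1mv_pderiv_pair p h
  have h0 := l1mv_nonneg (pderiv 0 p)
  have h1 := l1mv_nonneg (pderiv 1 p)
  have hi : i = 0 ∨ i = 1 := by fin_cases i <;> simp
  rcases hi with rfl | rfl <;> linarith

lemma totalDegree_pderiv_le (i : Fin 2) (p : MvPolynomial (Fin 2) ℂ) {D : ℕ}
    (h : p.totalDegree ≤ D + 1) : (pderiv i p).totalDegree ≤ D := by
  rw [pderiv_as_sum]
  refine (totalDegree_finset_sum _ _).trans (Finset.sup_le fun d hd => ?_)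
  by_cases hz : coeff d p * (d i : ℂ) = 0
  · simp [hz]
  rw [totalDegree_monomial _ hz, fin2_sum]
  have hdi : 1 ≤ d i := by
    rcases Nat.eq_zero_or_pos (d i) with h0 | h0
    · exfalso; apply hz; rw [h0]; simp
    · exact h0
  have hsum := le_totalDegree hd
  rw [fin2_sum] at hsum
  have hle : d 0 + d 1 ≤ D + 1 := hsum.trans h
  have hi : i = 0 ∨ i = 1 := by fin_cases i <;> simp
  rcases hi with rfl | rfl <;>
    simp only [Finsupp.tsub_apply, Finsupp.single_apply] <;>
    simp_all <;> omega

/-- Euler's identity for homogeneous polynomials in two variables. -/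
lemma euler {p : MvPolynomial (Fin 2) ℂ} {D : ℕ} (hp : p.IsHomogeneous D) :
    X 0 * pderiv 0 p + X 1 * pderiv 1 p = (D : ℂ) • p := by
  have key : ∀ i : Fin 2, ∀ d : Fin 2 →₀ ℕ, ∀ c : ℂ,
      X i * monomial (d - Finsupp.single i 1) (c * d i) = monomial d (c * d i) := by
    intro i d c
    rcases Nat.eq_zero_or_pos (d i) with h0 | h0
    · rw [h0]; simp
    · rw [X, monomial_mul, one_mul, add_tsub_cancel_of_le]
      rwa [Finsupp.single_le_iff]
  conv_lhs => rw [pderiv_as_sum, pderiv_as_sum, Finset.mul_sum, Finset.mul_sum]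
  conv_rhs => rw [p.as_sum, Finset.smul_sum]
  rw [← Finset.sum_add_distrib]
  refine Finset.sum_congr rfl fun d hd => ?_
  rw [key 0, key 1, ← map_add, smul_monomial]
  congr 1
  have hdeg : (d 0 + d 1 : ℕ) = D := by
    rw [← fin2_degree, Finsupp.degree_eq_weight_one]
    exact hp (mem_support_iff.mp hd)
  push_cast [← hdeg]
  rw [smul_eq_mul]
  ring

noncomputable def chop (N : ℕ) (d : Fin 2 →₀ ℕ) : Fin 2 →₀ ℕ :=
  Finsupp.single 0 (min (d 0) N) + Finsupp.single 1 (N - min (d 0) N)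

lemma chop_apply0 (N : ℕ) (d : Fin 2 →₀ ℕ) : chop N d 0 = min (d 0) N := by
  simp [chop]

lemma chop_apply1 (N : ℕ) (d : Fin 2 →₀ ℕ) : chop N d 1 = N - min (d 0) N := by
  simp [chop, Finsupp.single_apply]

lemma chop_degree (N : ℕ) (d : Fin 2 →₀ ℕ) : (chop N d).degree = N := by
  rw [fin2_degree, chop_apply0, chop_apply1]
  omega

lemma chop_le (N : ℕ) (d : Fin 2 →₀ ℕ) (h : N ≤ d 0 + d 1) : chop N d ≤ d := by
  intro i
  have hi : i = 0 ∨ i = 1 := by fin_cases i <;> simp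
  rcases hi with rfl | rfl
  · rw [chop_apply0]; omega
  · rw [chop_apply1]; omega

lemma ext_div {n : ℕ} (hn : 1 ≤ n) {a b : MvPolynomial (Fin 2) ℂ}
    (hnp : NormalizedPair n a b) (k : ℕ) (f : MvPolynomial (Fin 2) ℂ)
    (hf : f.IsHomogeneous (2 * n - 1 + k)) :
    ∃ u v : MvPolynomial (Fin 2) ℂ, u.IsHomogeneous (n - 1 + k) ∧
      v.IsHomogeneous (n - 1 + k) ∧ f = a * u + b * v ∧
      l1mv u + l1mv v ≤ l1mv f := by
  classical
  set N := 2 * n - 1 with hN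
  have key : ∀ d : Fin 2 →₀ ℕ, ∃ u v : MvPolynomial (Fin 2) ℂ,
      u.IsHomogeneous (n - 1) ∧ v.IsHomogeneous (n - 1) ∧
      monomial (chop N d) (coeff d f) = a * u + b * v ∧
      l1mv u + l1mv v ≤ l1mv (monomial (chop N d) (coeff d f)) :=
    fun d => hnp.2.2 _ (isHomogeneous_monomial _ (chop_degree N d))
  choose U V hU hV hEq hLe using key
  have hdeg : ∀ d ∈ f.support, d 0 + d 1 = N + k := by
    intro d hd
    have := hf (mem_support_iff.mp hd)
    rw [← fin2_degree, Finsupp.degree_eq_weight_one]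
    exact this
  have hrest : ∀ d ∈ f.support, (d - chop N d).degree = k := by
    intro d hd
    rw [fin2_degree, Finsupp.tsub_apply, Finsupp.tsub_apply, chop_apply0, chop_apply1]
    have := hdeg d hd
    omega
  refine ⟨∑ d ∈ f.support, U d * monomial (d - chop N d) 1,
          ∑ d ∈ f.support, V d * monomial (d - chop N d) 1, ?_, ?_, ?_, ?_⟩
  · exact IsHomogeneous.sum _ _ _ fun d hd =>
      (hU d).mul (isHomogeneous_monomial _ (hrest d hd))
  · exact IsHomogeneous.sum _ _ _ fun d hd =>
      (hV d).mul (isHomogeneous_monomial _ (hrest d hd))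
  · conv_lhs => rw [f.as_sum]
    rw [Finset.mul_sum, Finset.mul_sum, ← Finset.sum_add_distrib]
    refine Finset.sum_congr rfl fun d hd => ?_
    have hle : chop N d ≤ d := by
      refine chop_le N d ?_
      have := hdeg d hd; omega
    calc monomial d (coeff d f)
        = monomial (chop N d) (coeff d f) * monomial (d - chop N d) 1 := by
          rw [monomial_mul, mul_one, add_tsub_cancel_of_le hle]
      _ = (a * U d + b * V d) * monomial (d - chop N d) 1 := by rw [← hEq d]
      _ = a * (U d * monomial (d - chop N d) 1) + b * (V d * monomial (d - chop N d) 1) := by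
          ring
  · calc l1mv _ + l1mv _
        ≤ (∑ d ∈ f.support, l1mv (U d * monomial (d - chop N d) 1)) +
          ∑ d ∈ f.support, l1mv (V d * monomial (d - chop N d) 1) :=
          add_le_add (l1mv_sum_le _ _) (l1mv_sum_le _ _)
      _ = ∑ d ∈ f.support, (l1mv (U d) + l1mv (V d)) := by
          rw [← Finset.sum_add_distrib]
          exact Finset.sum_congr rfl fun d _ => by rw [l1mv_mul_monomial, l1mv_mul_monomial]
      _ ≤ ∑ d ∈ f.support, ‖coeff d f‖ := by
          refine Finset.sum_le_sum fun d _ => (hLe d).trans ?_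
          rw [l1mv_monomial]
      _ = l1mv f := rfl

lemma rep {N : ℕ} {ν : ℕ} (mm : Fin ν → ℕ × ℕ)
    (hminj : Function.Injective mm)
    (hmsurj : ∀ k l : ℕ, k + l ≤ N → ∃ i, mm i = (k, l))
    (p : MvPolynomial (Fin 2) ℂ) (hp : p.totalDegree ≤ N) :
    p = ∑ j, coeff (Finsupp.single 0 (mm j).1 + Finsupp.single 1 (mm j).2) p •
        (X 0 ^ (mm j).1 * X 1 ^ (mm j).2) := by
  classical
  have hmono : ∀ kl : ℕ × ℕ, (X (0:Fin 2) ^ kl.1 * X 1 ^ kl.2 : MvPolynomial (Fin 2) ℂ)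
      = monomial (Finsupp.single 0 kl.1 + Finsupp.single 1 kl.2) 1 := by
    intro kl
    rw [X_pow_eq_monomial, X_pow_eq_monomial, monomial_mul, mul_one]
  set mexp : Fin ν → (Fin 2 →₀ ℕ) :=
    fun j => Finsupp.single 0 (mm j).1 + Finsupp.single 1 (mm j).2 with hmexp
  have hmexpinj : Function.Injective mexp := by
    intro i j h
    apply hminj
    have h0 := congrArg (fun d : Fin 2 →₀ ℕ => d 0) h
    have h1 := congrArg (fun d : Fin 2 →₀ ℕ => d 1) h
    simp only [hmexp, Finsupp.add_apply, Finsupp.single_apply] at h0 h1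
    simp at h0 h1
    exact Prod.ext h0 h1
  ext e
  rw [coeff_sum]
  simp only [coeff_smul, hmono, coeff_monomial, smul_eq_mul]
  by_cases he : ∃ i, mexp i = e
  · obtain ⟨i, hi⟩ := he
    rw [Finset.sum_eq_single i]
    · rw [if_pos hi, mul_one, ← hi]
    · intro j _ hji
      rw [if_neg, mul_zero]
      intro h; exact hji (hmexpinj (h.trans hi.symm))
    · intro h; exact absurd (Finset.mem_univ i) h
  · rw [Finset.sum_eq_zero, eq_comm]
    · by_contra hc
      have hmem : e ∈ p.support := mem_support_iff.mpr (Ne.symm hc)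
      have hsum := le_totalDegree hmem
      rw [fin2_sum] at hsum
      obtain ⟨i, hi⟩ := hmsurj (e 0) (e 1) (hsum.trans hp)
      exact he ⟨i, by rw [hmexp]; simp only [hi]; exact (fin2_eq e).symm⟩
    · intro j _
      rw [if_neg fun h => he ⟨j, h⟩, mul_zero]

lemma rep_norm {ν : ℕ} (mm : Fin ν → ℕ × ℕ) (hminj : Function.Injective mm)
    (p : MvPolynomial (Fin 2) ℂ) :
    ∑ j, ‖coeff (Finsupp.single 0 (mm j).1 + Finsupp.single 1 (mm j).2) p‖
      ≤ l1mv p := by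
  classical
  set mexp : Fin ν → (Fin 2 →₀ ℕ) :=
    fun j => Finsupp.single 0 (mm j).1 + Finsupp.single 1 (mm j).2 with hmexp
  have hmexpinj : Function.Injective mexp := by
    intro i j h
    apply hminj
    have h0 := congrArg (fun d : Fin 2 →₀ ℕ => d 0) h
    have h1 := congrArg (fun d : Fin 2 →₀ ℕ => d 1) h
    simp only [hmexp, Finsupp.add_apply, Finsupp.single_apply] at h0 h1
    simp at h0 h1
    exact Prod.ext h0 h1
  rw [show (∑ j, ‖coeff (mexp j) p‖)
      = ∑ e ∈ Finset.univ.image mexp, ‖coeff e p‖ from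
    (Finset.sum_image (f := fun e => ‖coeff e p‖)
      (fun i _ j _ h => hmexpinj h)).symm]
  rw [l1mv_eq_sum (S := p.support ∪ Finset.univ.image mexp) Finset.subset_union_left]
  refine Finset.sum_le_sum_of_subset_of_nonneg Finset.subset_union_right ?_
  intro e _ _
  exact norm_nonneg _


lemma l1mv_zero : l1mv 0 = 0 := by simp [l1mv]

lemma coeff_hc_sub (p : MvPolynomial (Fin 2) ℂ) (D : ℕ) (d : Fin 2 →₀ ℕ) :
    coeff d (p - homogeneousComponent D p) = if d.degree = D then 0 else coeff d p := by
  rw [coeff_sub, coeff_homogeneousComponent]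
  split <;> simp

lemma totalDegree_hc_sub (p : MvPolynomial (Fin 2) ℂ) (D : ℕ) (h : p.totalDegree ≤ D + 1) :
    (p - homogeneousComponent (D + 1) p).totalDegree ≤ D := by
  rw [totalDegree]
  refine Finset.sup_le fun d hd => ?_
  have hne := mem_support_iff.mp hd
  rw [coeff_hc_sub] at hne
  rw [fin2_sum]
  by_cases hdd : d.degree = D + 1
  · rw [if_pos hdd] at hne; exact absurd rfl hne
  · rw [if_neg hdd] at hne
    have := le_totalDegree (mem_support_iff.mpr hne)
    rw [fin2_sum] at this
    rw [fin2_degree] at hdd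
    omega

lemma l1mv_hc_split (p : MvPolynomial (Fin 2) ℂ) (D : ℕ) :
    l1mv (homogeneousComponent D p) + l1mv (p - homogeneousComponent D p) = l1mv p := by
  have h := l1mv_split (homogeneousComponent D p) (p - homogeneousComponent D p) ?_
  · rw [add_sub_cancel] at h; exact h.symm
  · intro d
    by_cases hdd : d.degree = D
    · right; rw [coeff_hc_sub, if_pos hdd]
    · left; rw [coeff_homogeneousComponent, if_neg hdd]

lemma l1mv_hc_le (p : MvPolynomial (Fin 2) ℂ) (D : ℕ) :
    l1mv (homogeneousComponent D p) ≤ l1mv p := by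
  have := l1mv_hc_split p D
  have := l1mv_nonneg (p - homogeneousComponent D p)
  linarith

lemma div (n : ℕ) (hn : 1 ≤ n) (Hx Hy a b : MvPolynomial (Fin 2) ℂ)
    (hnp : NormalizedPair n a b)
    (hdx : (Hx - a).totalDegree ≤ n - 1) (hdy : (Hy - b).totalDegree ≤ n - 1)
    (hlx : l1mv (Hx - a) + l1mv (Hy - b) ≤ n) :
    ∀ k : ℕ, ∀ f : MvPolynomial (Fin 2) ℂ, f.totalDegree ≤ 2 * n - 2 + k →
    ∃ u v r : MvPolynomial (Fin 2) ℂ, f = Hx * v - Hy * u + r ∧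
      u.totalDegree ≤ n + k - 2 ∧ v.totalDegree ≤ n + k - 2 ∧
      r.totalDegree ≤ 2 * n - 2 ∧
      l1mv u + l1mv v ≤ (∑ j ∈ Finset.range k, (n : ℝ) ^ j) * l1mv f ∧
      l1mv r ≤ (n : ℝ) ^ k * l1mv f := by
  intro k
  induction k with
  | zero =>
    intro f hf
    exact ⟨0, 0, f, by ring, by simp, by simp, hf, by simp [l1mv_zero], by simp⟩
  | succ k ih =>
    intro f hf
    set D := 2 * n - 2 + k with hD
    have hD1 : 2 * n - 2 + (k + 1) = D + 1 := by omega
    have hD2 : D + 1 = 2 * n - 1 + k := by omega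
    set fh := homogeneousComponent (D + 1) f with hfh
    have hfhhom : fh.IsHomogeneous (2 * n - 1 + k) := by
      rw [hfh, hD2]; exact homogeneousComponent_isHomogeneous _ f
    obtain ⟨β, α, hβ, hα, hfheq, hαβ⟩ := ext_div hn hnp k fh hfhhom
    -- fh = a * β + b * α
    set g := f - fh - (Hx - a) * β - (Hy - b) * α with hg
    have hgdeg : g.totalDegree ≤ 2 * n - 2 + k := by
      have h1 : (f - fh).totalDegree ≤ D := by
        refine totalDegree_hc_sub f D ?_
        rw [← hD1]; exact hf
      have h2 : ((Hx - a) * β).totalDegree ≤ 2 * n - 2 + k := by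
        refine (totalDegree_mul _ _).trans ?_
        have := hβ.totalDegree_le
        omega
      have h3 : ((Hy - b) * α).totalDegree ≤ 2 * n - 2 + k := by
        refine (totalDegree_mul _ _).trans ?_
        have := hα.totalDegree_le
        omega
      rw [hg]
      refine (totalDegree_sub _ _).trans (max_le ((totalDegree_sub _ _).trans
        (max_le (h1.trans (by omega)) h2)) h3)
    have hgnorm : l1mv g ≤ (n : ℝ) * l1mv f := by
      have h1 : l1mv (f - fh) = l1mv f - l1mv fh := by
        have := l1mv_hc_split f (D + 1)
        rw [← hfh] at this
        linarith
      have h2 : l1mv ((Hx - a) * β) ≤ l1mv (Hx - a) * l1mv β := l1mv_mul_le _ _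
      have h3 : l1mv ((Hy - b) * α) ≤ l1mv (Hy - b) * l1mv α := l1mv_mul_le _ _
      have h4 : l1mv (Hx - a) * l1mv β + l1mv (Hy - b) * l1mv α
          ≤ (n : ℝ) * l1mv fh := by
        have b1 := l1mv_nonneg (Hx - a)
        have b2 := l1mv_nonneg (Hy - b)
        have b3 := l1mv_nonneg β
        have b4 := l1mv_nonneg α
        nlinarith
      have h5 : l1mv fh ≤ l1mv f := l1mv_hc_le f (D + 1)
      have h6 : (1 : ℝ) ≤ (n : ℝ) := by exact_mod_cast hn
      calc l1mv g ≤ l1mv (f - fh - (Hx - a) * β) + l1mv ((Hy - b) * α) :=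
            l1mv_sub_le _ _
        _ ≤ l1mv (f - fh) + l1mv ((Hx - a) * β) + l1mv ((Hy - b) * α) := by
            have := l1mv_sub_le (f - fh) ((Hx - a) * β)
            linarith
        _ ≤ (l1mv f - l1mv fh) + (n : ℝ) * l1mv fh := by linarith
        _ ≤ (n : ℝ) * l1mv f := by nlinarith
    obtain ⟨u₀, v₀, r, hgeq, hu₀, hv₀, hr, huv₀, hrn⟩ := ih g hgdeg
    refine ⟨u₀ - α, v₀ + β, r, ?_, ?_, ?_, hr, ?_, ?_⟩
    · -- f = Hx * (v₀ + β) - Hy * (u₀ - α) + r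
      have : g = Hx * v₀ - Hy * u₀ + r := hgeq
      rw [hg] at this
      calc f = (f - fh - (Hx - a) * β - (Hy - b) * α)
            + fh + (Hx - a) * β + (Hy - b) * α := by ring
        _ = (Hx * v₀ - Hy * u₀ + r) + (a * β + b * α) + (Hx - a) * β + (Hy - b) * α := by
            rw [← this, ← hfheq]
        _ = Hx * (v₀ + β) - Hy * (u₀ - α) + r := by ring
    · refine (totalDegree_sub _ _).trans (max_le (hu₀.trans (by omega)) ?_)
      exact hα.totalDegree_le.trans (by omega)
    · refine (totalDegree_add _ _).trans (max_le (hv₀.trans (by omega)) ?_)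
      exact hβ.totalDegree_le.trans (by omega)
    · have t1 : l1mv (u₀ - α) ≤ l1mv u₀ + l1mv α := l1mv_sub_le _ _
      have t2 : l1mv (v₀ + β) ≤ l1mv v₀ + l1mv β := l1mv_add_le _ _
      have t3 : l1mv u₀ + l1mv v₀ ≤ (∑ j ∈ Finset.range k, (n : ℝ) ^ j) * l1mv g := huv₀
      have t4 : l1mv fh ≤ l1mv f := l1mv_hc_le f (D + 1)
      have t5 : (0 : ℝ) ≤ ∑ j ∈ Finset.range k, (n : ℝ) ^ j :=
        Finset.sum_nonneg fun j _ => by positivity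
      have t6 : (∑ j ∈ Finset.range k, (n : ℝ) ^ j) * l1mv g
          ≤ (∑ j ∈ Finset.range k, (n : ℝ) ^ j) * ((n : ℝ) * l1mv f) :=
        mul_le_mul_of_nonneg_left hgnorm t5
      rw [geom_sum_succ]
      have t7 : l1mv α + l1mv β ≤ l1mv f := by linarith [hαβ.trans t4]
      calc l1mv (u₀ - α) + l1mv (v₀ + β)
          ≤ (l1mv u₀ + l1mv v₀) + (l1mv α + l1mv β) := by linarith
        _ ≤ (∑ j ∈ Finset.range k, (n : ℝ) ^ j) * ((n : ℝ) * l1mv f) + l1mv f := by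
            linarith
        _ = ((n : ℝ) * ∑ j ∈ Finset.range k, (n : ℝ) ^ j + 1) * l1mv f := by ring
    · have : (n : ℝ) ^ k * l1mv g ≤ (n : ℝ) ^ k * ((n : ℝ) * l1mv f) :=
        mul_le_mul_of_nonneg_left hgnorm (by positivity)
      calc l1mv r ≤ (n : ℝ) ^ k * l1mv g := hrn
        _ ≤ (n : ℝ) ^ (k + 1) * l1mv f := by rw [pow_succ]; nlinarith

lemma geo (n : ℕ) : ∀ m : ℕ, (n - 1) * (∑ j ∈ Finset.range m, n ^ j) + 1 = n ^ m ∨ n = 0 := by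
  intro m
  rcases Nat.eq_zero_or_pos n with h0 | h1
  · right; exact h0
  left
  induction m with
  | zero => simp
  | succ m ih =>
    rw [Finset.sum_range_succ, Nat.mul_add]
    have h2 : (n - 1) * n ^ m + n ^ m = n * n ^ m := by
      nth_rewrite 2 [← one_mul (n ^ m)]
      rw [← Nat.add_mul]
      congr 1
      omega
    have h3 : n * n ^ m = n ^ (m + 1) := (pow_succ' n m).symm
    omega

lemma binom (n : ℕ) (hn : 1 ≤ n) :
    5 * n ^ (n + 1) + 3 * n ^ n ≤ 2 * (n + 1) ^ (n + 1) := by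
  have hexp : (n + 1) ^ (n + 1) = ∑ k ∈ Finset.range (n + 2), n ^ k * (n + 1).choose k := by
    have := add_pow n 1 (n + 1)
    simp only [one_pow, mul_one] at this
    exact this
  have hsub : ({n - 1, n, n + 1} : Finset ℕ) ⊆ Finset.range (n + 2) := by
    intro x hx
    simp only [Finset.mem_insert, Finset.mem_singleton] at hx
    rw [Finset.mem_range]
    omega
  have hsum : ∑ k ∈ ({n - 1, n, n + 1} : Finset ℕ), n ^ k * (n + 1).choose k
      ≤ (n + 1) ^ (n + 1) := by
    rw [hexp]
    exact Finset.sum_le_sum_of_subset hsub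
  have hne1 : n - 1 ∉ ({n, n + 1} : Finset ℕ) := by simp; omega
  have hne2 : n ∉ ({n + 1} : Finset ℕ) := by simp
  rw [Finset.sum_insert hne1, Finset.sum_insert hne2, Finset.sum_singleton] at hsum
  have hc1 : (n + 1).choose (n + 1) = 1 := Nat.choose_self _
  have hc2 : (n + 1).choose n = n + 1 := Nat.choose_succ_self_right n
  have hc3 : (n + 1).choose (n - 1) = (n + 1) * n / 2 := by
    have h2 : (2 : ℕ) ≤ n + 1 := by omega
    have hs := Nat.choose_symm h2
    have hnn : n + 1 - 2 = n - 1 := by omega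
    rw [hnn] at hs
    rw [hs, Nat.choose_two_right]
    norm_num
  rw [hc1, hc2, hc3, mul_one] at hsum
  set X := (n + 1) * n / 2 with hX
  have h2X : 2 * X = (n + 1) * n := by
    rw [hX]
    refine Nat.mul_div_cancel' ?_
    rw [mul_comm]
    exact (Nat.even_mul_succ_self n).two_dvd
  have hpow1 : n ^ (n - 1) * n = n ^ n := by
    rw [← pow_succ]
    congr 1
    omega
  have hpow2 : n ^ n * n = n ^ (n + 1) := (pow_succ n n).symm
  have e1 : 2 * (n ^ (n - 1) * X) = (n + 1) * n ^ n := by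
    rw [show 2 * (n ^ (n - 1) * X) = 2 * X * n ^ (n - 1) by ring, h2X,
      show (n + 1) * n * n ^ (n - 1) = (n + 1) * (n ^ (n - 1) * n) by ring, hpow1]
  have e2 : n ^ n * (n + 1) = n ^ (n + 1) + n ^ n := by
    rw [show n ^ n * (n + 1) = n ^ n * n + n ^ n by ring, hpow2]
  nlinarith [hsum, e1, e2]
  done

lemma numeric (n : ℕ) (hn : 1 ≤ n) :
    (2 * n - 1) * (2 * n ^ n + (2 * n - 1) * (1 + 2 * (∑ j ∈ Finset.range n, n ^ j)))
      ≤ 6 * (n + 1) ^ (n + 1) := by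
  rcases le_or_gt n 3 with h3 | h4
  · interval_cases n <;> simp [Finset.sum_range_succ] <;> norm_num
  · -- n ≥ 4
    obtain ⟨m, rfl⟩ : ∃ m, n = m + 1 := ⟨n - 1, by omega⟩
    have hm : 3 ≤ m := by omega
    have hgeo : m * (∑ j ∈ Finset.range (m + 1), (m + 1) ^ j) + 1 = (m + 1) ^ (m + 1) := by
      have := (geo (m + 1) (m + 1)).resolve_right (by omega)
      simpa using this
    set T := ∑ j ∈ Finset.range (m + 1), (m + 1) ^ j with hT
    have hsub : 2 * (m + 1) - 1 = 2 * m + 1 := by omega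
    rw [hsub]
    have hbin : 5 * (m + 1) ^ (m + 2) + 3 * (m + 1) ^ (m + 1) ≤ 2 * (m + 2) ^ (m + 2) :=
      binom (m + 1) (by omega)
    have hQP : (m + 1) ^ (m + 2) = (m + 1) * (m + 1) ^ (m + 1) := by
      rw [pow_succ]; ring
    have hP3 : (m + 1) ^ 3 ≤ (m + 1) ^ (m + 1) := Nat.pow_le_pow_right (by omega) (by omega)
    obtain ⟨P', hP'⟩ : ∃ P', (m + 1) ^ (m + 1) = P' + 1 :=
      ⟨(m + 1) ^ (m + 1) - 1, by have : 1 ≤ (m+1)^(m+1) := Nat.one_le_pow _ _ (by omega); omega⟩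
    refine Nat.le_of_mul_le_mul_left ?_ (show 0 < m by omega)
    have hmT : m * T = P' := by omega
    have key : m * ((2 * m + 1) * (2 * (m + 1) ^ (m + 1) + (2 * m + 1) * (1 + 2 * T)))
        = (2 * m + 1) * 2 * (m + 1) ^ (m + 1) * m + (2 * m + 1) ^ 2 * (m + 2 * (m * T)) := by
      ring
    rw [key, hmT, hP']
    have hbin' : 15 * ((m + 1) * (P' + 1)) + 9 * (P' + 1) ≤ 6 * (m + 2) ^ (m + 2) := by
      rw [hQP, hP'] at hbin
      linarith
    have hP'3 : m ^ 3 + 3 * m ^ 2 ≤ P' := by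
      have hcube : (m + 1) ^ 3 = m ^ 3 + 3 * m ^ 2 + 3 * m + 1 := by ring
      omega
    have hstep : (2 * m + 1) * 2 * (P' + 1) * m + (2 * m + 1) ^ 2 * (m + 2 * P')
        ≤ m * (15 * ((m + 1) * (P' + 1)) + 9 * (P' + 1)) := by
      nlinarith [hP'3, hm, Nat.mul_le_mul_left (3 * m ^ 2) hP'3]
    calc (2 * m + 1) * 2 * (P' + 1) * m + (2 * m + 1) ^ 2 * (m + 2 * P')
        ≤ m * (15 * ((m + 1) * (P' + 1)) + 9 * (P' + 1)) := hstep
      _ ≤ m * (6 * (m + 2) ^ (m + 2)) := Nat.mul_le_mul_left m hbin'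

lemma mono_eq (k l : ℕ) : (X 0 ^ k * X 1 ^ l : MvPolynomial (Fin 2) ℂ)
    = monomial (Finsupp.single 0 k + Finsupp.single 1 l) 1 := by
  rw [X_pow_eq_monomial, X_pow_eq_monomial, monomial_mul, mul_one]


end PF

/-- the redundant Picard–Fuchs system, Theorem 2 of the
paper.  Let `H` be balanced of degree `n+1`, and let `m : Fin ν → ℕ × ℕ`,
`ν = n(2n−1)`, enumerate the exponents of the monomials `x^k y^l` with
`k + l ≤ 2n − 2`.  Then there are ν×ν matrices `A, B` with
`‖A‖ + ‖B‖ ≤ 6n(n+1)^{n+1}` and polynomials `uᵢ, vᵢ` such that for every `i`: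
`H·mᵢ = H_x·vᵢ − H_y·uᵢ + Σ_j A_{ij}·m_j` and
`∂vᵢ/∂x − ∂uᵢ/∂y = Σ_j B_{ij}·m_j`.  (These identities encode
`H·dωᵢ = dH∧ηᵢ + Σ_j A_{ij}·dω_j`, `dηᵢ = Σ_j B_{ij}·dω_j`, which upon
integration over cycles on `{H = t}` give `(t−A)·İ = B·I`.) -/
theorem stmt6 (n : ℕ) (hn : 1 ≤ n) (H : MvPolynomial (Fin 2) ℂ)
    (hdeg : H.totalDegree = n + 1) (hbal : IsBalanced n H)
    (m : Fin (n * (2 * n - 1)) → ℕ × ℕ)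
    (hminj : Function.Injective m)
    (hmle : ∀ i, (m i).1 + (m i).2 ≤ 2 * n - 2)
    (hmsurj : ∀ k l : ℕ, k + l ≤ 2 * n - 2 → ∃ i, m i = (k, l)) :
    ∃ A B : Fin (n * (2 * n - 1)) → Fin (n * (2 * n - 1)) → ℂ,
      matNorm A + matNorm B ≤ 6 * n * ((n : ℝ) + 1) ^ (n + 1) ∧
      ∃ u v : Fin (n * (2 * n - 1)) → MvPolynomial (Fin 2) ℂ,
        ∀ i,
          (H * (X 0 ^ (m i).1 * X 1 ^ (m i).2) =
            pderiv 0 H * v i - pderiv 1 H * u i +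
              ∑ j, A i j • (X 0 ^ (m j).1 * X 1 ^ (m j).2)) ∧
          (pderiv 0 (v i) - pderiv 1 (u i) =
            ∑ j, B i j • (X 0 ^ (m j).1 * X 1 ^ (m j).2)) := by

  classical
  obtain ⟨hquasi, hsm⟩ := hbal
  have hν1 : 1 ≤ 2 * n - 1 := by omega
  haveI : Nonempty (Fin (n * (2 * n - 1))) := ⟨⟨0, Nat.mul_pos hn hν1⟩⟩
  set Hh := homogeneousComponent (n + 1) H with hHh
  set a := pderiv 0 Hh with ha
  set b := pderiv 1 Hh with hb
  have hnp : NormalizedPair n a b := hquasi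
  have hHhdeg : (H - Hh).totalDegree ≤ n := PF.totalDegree_hc_sub H n (by rw [hdeg])
  have hsub0 : pderiv 0 H - a = pderiv (0 : Fin 2) (H - Hh) := by rw [map_sub]
  have hsub1 : pderiv 1 H - b = pderiv (1 : Fin 2) (H - Hh) := by rw [map_sub]
  have hdx : (pderiv 0 H - a).totalDegree ≤ n - 1 := by
    rw [hsub0]
    exact PF.totalDegree_pderiv_le 0 _ (hHhdeg.trans (by omega))
  have hdy : (pderiv 1 H - b).totalDegree ≤ n - 1 := by
    rw [hsub1]
    exact PF.totalDegree_pderiv_le 1 _ (hHhdeg.trans (by omega))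
  have hlx : l1mv (pderiv 0 H - a) + l1mv (pderiv 1 H - b) ≤ (n : ℝ) := by
    rw [hsub0, hsub1]
    have h1 := PF.l1mv_pderiv_pair (H - Hh) hHhdeg
    have h2 : (n : ℝ) * l1mv (H - Hh) ≤ (n : ℝ) * 1 :=
      mul_le_mul_of_nonneg_left hsm (by positivity)
    linarith
  set T : ℝ := ∑ j ∈ Finset.range n, (n : ℝ) ^ j with hT
  have hT0 : 0 ≤ T := Finset.sum_nonneg fun j _ => by positivity
  have main : ∀ i : Fin (n * (2 * n - 1)), ∃ u v r : MvPolynomial (Fin 2) ℂ,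
      H * (X 0 ^ (m i).1 * X 1 ^ (m i).2) = pderiv 0 H * v - pderiv 1 H * u + r ∧
      r.totalDegree ≤ 2 * n - 2 ∧ l1mv r ≤ 2 * (n : ℝ) ^ n ∧
      (pderiv 0 v - pderiv 1 u).totalDegree ≤ 2 * n - 2 ∧
      l1mv (pderiv 0 v - pderiv 1 u) ≤ ((2 * n - 1 : ℕ) : ℝ) * (2 * T + 1) := by
    intro i
    have hkl : (m i).1 + (m i).2 ≤ 2 * n - 2 := hmle i
    set k := (m i).1
    set l := (m i).2
    set ei : Fin 2 →₀ ℕ := Finsupp.single 0 k + Finsupp.single 1 l with hei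
    have hMi : (X 0 ^ k * X 1 ^ l : MvPolynomial (Fin 2) ℂ) = monomial ei 1 :=
      PF.mono_eq k l
    have heik : ei 0 = k := by simp [hei]
    have heil : ei 1 = l := by simp [hei, Finsupp.single_apply]
    have hMideg : (monomial ei (1:ℂ)).totalDegree ≤ 2 * n - 2 := by
      rw [totalDegree_monomial _ (one_ne_zero), PF.fin2_sum, heik, heil]
      exact hkl
    have hne : ((n : ℂ) + 1) ≠ 0 := by
      have := Nat.cast_add_one_ne_zero (R := ℂ) n
      exact_mod_cast this
    set c : ℂ := ((n : ℂ) + 1)⁻¹ with hc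
    have hcC : (C c * C ((n : ℂ) + 1) : MvPolynomial (Fin 2) ℂ) = 1 := by
      rw [← C_mul, inv_mul_cancel₀ hne, C_1]
    have heuler : X 0 * a + X 1 * b = C ((n : ℂ) + 1) * Hh := by
      have h := PF.euler (p := Hh) (D := n + 1) (homogeneousComponent_isHomogeneous (n+1) H)
      rw [smul_eq_C_mul] at h
      rw [ha, hb]
      convert h using 3
      push_cast
      ring
    set Mi := (monomial ei (1:ℂ) : MvPolynomial (Fin 2) ℂ) with hMidef
    set V0 := C c * (X 0 * Mi) with hV0
    set U0 := C c * (X 1 * Mi) with hU0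
    set f1 := H * Mi - pderiv 0 H * V0 - pderiv 1 H * U0 with hf1
    have hf1eq : f1 = (H - Hh) * Mi - C c * ((pderiv 0 H - a) * (X 0 * Mi))
        - C c * ((pderiv 1 H - b) * (X 1 * Mi)) := by
      rw [hf1, hV0, hU0]
      linear_combination (-(C c * Mi)) * heuler - (Hh * Mi) * hcC
    have hX0Mi : X 0 * Mi = monomial (Finsupp.single 0 1 + ei) 1 := by
      rw [hMidef, X, monomial_mul, one_mul]
    have hX1Mi : X 1 * Mi = monomial (Finsupp.single 1 1 + ei) 1 := by
      rw [hMidef, X, monomial_mul, one_mul]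
    have hX0deg : (X 0 * Mi).totalDegree ≤ 2 * n - 1 := by
      rw [hX0Mi, totalDegree_monomial _ (one_ne_zero), PF.fin2_sum]
      simp [heik, heil, Finsupp.single_apply]
      omega
    have hX1deg : (X 1 * Mi).totalDegree ≤ 2 * n - 1 := by
      rw [hX1Mi, totalDegree_monomial _ (one_ne_zero), PF.fin2_sum]
      simp [heik, heil, Finsupp.single_apply]
      omega
    have hCc : ∀ p : MvPolynomial (Fin 2) ℂ, C c * p = c • p := fun p =>
      (smul_eq_C_mul p c).symm
    have habs : ‖c‖ = ((n : ℝ) + 1)⁻¹ := by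
      rw [hc, norm_inv]
      congr 1
      have : ((n : ℂ) + 1) = ((n + 1 : ℕ) : ℂ) := by push_cast; ring
      rw [this, Complex.norm_natCast]
      push_cast
      ring
    have hf1deg : f1.totalDegree ≤ 2 * n - 2 + n := by
      rw [hf1eq]
      have d1 : ((H - Hh) * Mi).totalDegree ≤ 2 * n - 2 + n := by
        refine (totalDegree_mul _ _).trans ?_
        have := hMideg
        omega
      have d2 : (C c * ((pderiv 0 H - a) * (X 0 * Mi))).totalDegree ≤ 2 * n - 2 + n := by
        rw [hCc]
        refine (totalDegree_smul_le _ _).trans ((totalDegree_mul _ _).trans ?_)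
        have := hdx; have := hX0deg
        omega
      have d3 : (C c * ((pderiv 1 H - b) * (X 1 * Mi))).totalDegree ≤ 2 * n - 2 + n := by
        rw [hCc]
        refine (totalDegree_smul_le _ _).trans ((totalDegree_mul _ _).trans ?_)
        have := hdy; have := hX1deg
        omega
      exact (totalDegree_sub _ _).trans (max_le ((totalDegree_sub _ _).trans
        (max_le d1 d2)) d3)
    have hf1norm : l1mv f1 ≤ 2 := by
      rw [hf1eq]
      have e1 : l1mv ((H - Hh) * Mi) = l1mv (H - Hh) := by
        rw [hMidef]
        exact PF.l1mv_mul_monomial _ _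
      have e2 : l1mv (C c * ((pderiv 0 H - a) * (X 0 * Mi)))
          = ‖c‖ * l1mv (pderiv 0 H - a) := by
        rw [hCc, PF.l1mv_smul, hX0Mi, PF.l1mv_mul_monomial]
      have e3 : l1mv (C c * ((pderiv 1 H - b) * (X 1 * Mi)))
          = ‖c‖ * l1mv (pderiv 1 H - b) := by
        rw [hCc, PF.l1mv_smul, hX1Mi, PF.l1mv_mul_monomial]
      have hab : ‖c‖ * (n : ℝ) ≤ 1 := by
        rw [habs, show ((n:ℝ)+1)⁻¹ * (n:ℝ) = (n:ℝ)/((n:ℝ)+1) by ring,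
          div_le_one (by positivity)]
        linarith
      have habnn : 0 ≤ ‖c‖ := norm_nonneg _
      have t1 := PF.l1mv_sub_le ((H - Hh) * Mi - C c * ((pderiv 0 H - a) * (X 0 * Mi)))
        (C c * ((pderiv 1 H - b) * (X 1 * Mi)))
      have t2 := PF.l1mv_sub_le ((H - Hh) * Mi) (C c * ((pderiv 0 H - a) * (X 0 * Mi)))
      have t3 : ‖c‖ * l1mv (pderiv 0 H - a) + ‖c‖ * l1mv (pderiv 1 H - b)
          ≤ ‖c‖ * (n : ℝ) := by
        rw [← mul_add]
        exact mul_le_mul_of_nonneg_left hlx habnn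
      rw [e2] at t2
      rw [e3] at t1
      linarith [e1, hsm]
    obtain ⟨u₂, v₂, r, hdiveq, hu₂d, hv₂d, hrd, huv, hrn⟩ :=
      PF.div n hn (pderiv 0 H) (pderiv 1 H) a b hnp hdx hdy hlx n f1 hf1deg
    have huvT : l1mv u₂ + l1mv v₂ ≤ T * 2 := by
      refine huv.trans ?_
      rw [← hT]
      exact mul_le_mul_of_nonneg_left hf1norm hT0
    refine ⟨u₂ - U0, v₂ + V0, r, ?_, hrd, ?_, ?_, ?_⟩
    · rw [hMi]
      have h := hdiveq
      rw [hf1] at h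
      linear_combination h
    · refine hrn.trans ?_
      have : (n:ℝ)^n * l1mv f1 ≤ (n:ℝ)^n * 2 :=
        mul_le_mul_of_nonneg_left hf1norm (by positivity)
      linarith
    · -- degree of w
      have hU0deg : U0.totalDegree ≤ 2 * n - 1 := by
        rw [hU0, hCc]
        exact (totalDegree_smul_le _ _).trans hX1deg
      have hV0deg : V0.totalDegree ≤ 2 * n - 1 := by
        rw [hV0, hCc]
        exact (totalDegree_smul_le _ _).trans hX0deg
      have hudeg : (u₂ - U0).totalDegree ≤ 2 * n - 1 :=
        (totalDegree_sub _ _).trans (max_le (hu₂d.trans (by omega)) hU0deg)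
      have hvdeg : (v₂ + V0).totalDegree ≤ 2 * n - 1 :=
        (totalDegree_add _ _).trans (max_le (hv₂d.trans (by omega)) hV0deg)
      have w0 : (pderiv (0:Fin 2) (v₂ + V0)).totalDegree ≤ 2 * n - 2 :=
        PF.totalDegree_pderiv_le 0 _ (hvdeg.trans (by omega))
      have w1 : (pderiv (1:Fin 2) (u₂ - U0)).totalDegree ≤ 2 * n - 2 :=
        PF.totalDegree_pderiv_le 1 _ (hudeg.trans (by omega))
      exact (totalDegree_sub _ _).trans (max_le w0 w1)
    · -- norm of w
      have hU0deg : U0.totalDegree ≤ 2 * n - 1 := by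
        rw [hU0, hCc]
        exact (totalDegree_smul_le _ _).trans hX1deg
      have hV0deg : V0.totalDegree ≤ 2 * n - 1 := by
        rw [hV0, hCc]
        exact (totalDegree_smul_le _ _).trans hX0deg
      have hudeg : (u₂ - U0).totalDegree ≤ 2 * n - 1 :=
        (totalDegree_sub _ _).trans (max_le (hu₂d.trans (by omega)) hU0deg)
      have hvdeg : (v₂ + V0).totalDegree ≤ 2 * n - 1 :=
        (totalDegree_add _ _).trans (max_le (hv₂d.trans (by omega)) hV0deg)
      have hU0n : l1mv U0 = ‖c‖ := by
        rw [hU0, hCc, PF.l1mv_smul, hX1Mi, PF.l1mv_monomial]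
        simp
      have hV0n : l1mv V0 = ‖c‖ := by
        rw [hV0, hCc, PF.l1mv_smul, hX0Mi, PF.l1mv_monomial]
        simp
      have habs2 : 2 * ‖c‖ ≤ 1 := by
        rw [habs, show (2:ℝ) * ((n:ℝ)+1)⁻¹ = 2/((n:ℝ)+1) by ring,
          div_le_one (by positivity)]
        have : (1:ℝ) ≤ (n:ℝ) := by exact_mod_cast hn
        linarith
      have hun : l1mv (u₂ - U0) ≤ l1mv u₂ + ‖c‖ := by
        rw [← hU0n]; exact PF.l1mv_sub_le _ _
      have hvn : l1mv (v₂ + V0) ≤ l1mv v₂ + ‖c‖ := by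
        rw [← hV0n]; exact PF.l1mv_add_le _ _
      have p0 : l1mv (pderiv (0:Fin 2) (v₂ + V0)) ≤ ((2*n-1 : ℕ):ℝ) * l1mv (v₂ + V0) :=
        PF.l1mv_pderiv_le 0 _ hvdeg
      have p1 : l1mv (pderiv (1:Fin 2) (u₂ - U0)) ≤ ((2*n-1 : ℕ):ℝ) * l1mv (u₂ - U0) :=
        PF.l1mv_pderiv_le 1 _ hudeg
      have hcast : (0:ℝ) ≤ ((2*n-1 : ℕ):ℝ) := by positivity
      have hsum : l1mv (v₂ + V0) + l1mv (u₂ - U0) ≤ 2 * T + 1 := by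
        have := huvT
        have := habs2
        linarith
      calc l1mv (pderiv 0 (v₂ + V0) - pderiv 1 (u₂ - U0))
          ≤ l1mv (pderiv (0:Fin 2) (v₂ + V0)) + l1mv (pderiv (1:Fin 2) (u₂ - U0)) :=
            PF.l1mv_sub_le _ _
        _ ≤ ((2*n-1 : ℕ):ℝ) * l1mv (v₂ + V0) + ((2*n-1 : ℕ):ℝ) * l1mv (u₂ - U0) :=
            add_le_add p0 p1
        _ = ((2*n-1 : ℕ):ℝ) * (l1mv (v₂ + V0) + l1mv (u₂ - U0)) := (mul_add _ _ _).symm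
        _ ≤ ((2*n-1 : ℕ):ℝ) * (2 * T + 1) :=
            mul_le_mul_of_nonneg_left hsum hcast
  choose uu vv rr h1 h2 h3 h4 h5 using main
  refine ⟨fun i j => coeff (Finsupp.single 0 (m j).1 + Finsupp.single 1 (m j).2) (rr i),
    fun i j => coeff (Finsupp.single 0 (m j).1 + Finsupp.single 1 (m j).2)
      (pderiv 0 (vv i) - pderiv 1 (uu i)), ?_, uu, vv, fun i => ⟨?_, ?_⟩⟩
  · -- norm bound
    have hA : matNorm (fun i j =>
        coeff (Finsupp.single 0 (m j).1 + Finsupp.single 1 (m j).2) (rr i))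
        ≤ ((n * (2*n-1) : ℕ):ℝ) * (2 * (n:ℝ)^n) := by
      refine ciSup_le fun j => ?_
      calc ∑ i, ‖coeff (Finsupp.single 0 (m j).1 + Finsupp.single 1 (m j).2) (rr i)‖
          ≤ ∑ _i : Fin (n * (2*n-1)), 2 * (n:ℝ)^n :=
            Finset.sum_le_sum fun i _ => (PF.abs_coeff_le_l1mv _ _).trans (h3 i)
        _ = ((n * (2*n-1) : ℕ):ℝ) * (2 * (n:ℝ)^n) := by
            rw [Finset.sum_const, Finset.card_univ, Fintype.card_fin, nsmul_eq_mul]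
    have hB : matNorm (fun i j =>
        coeff (Finsupp.single 0 (m j).1 + Finsupp.single 1 (m j).2)
          (pderiv 0 (vv i) - pderiv 1 (uu i)))
        ≤ ((n * (2*n-1) : ℕ):ℝ) * (((2*n-1 : ℕ):ℝ) * (2 * T + 1)) := by
      refine ciSup_le fun j => ?_
      calc ∑ i, ‖coeff (Finsupp.single 0 (m j).1 + Finsupp.single 1 (m j).2)
              (pderiv 0 (vv i) - pderiv 1 (uu i))‖
          ≤ ∑ _i : Fin (n * (2*n-1)), ((2*n-1 : ℕ):ℝ) * (2 * T + 1) :=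
            Finset.sum_le_sum fun i _ => (PF.abs_coeff_le_l1mv _ _).trans (h5 i)
        _ = ((n * (2*n-1) : ℕ):ℝ) * (((2*n-1 : ℕ):ℝ) * (2 * T + 1)) := by
            rw [Finset.sum_const, Finset.card_univ, Fintype.card_fin, nsmul_eq_mul]
    have hTnat : T = ((∑ j ∈ Finset.range n, n ^ j : ℕ) : ℝ) := by
      rw [hT]; push_cast; rfl
    have hnum := PF.numeric n hn
    have h := Nat.mul_le_mul_left n hnum
    have key2 : ((n * (2*n-1) : ℕ):ℝ) * (2 * (n:ℝ)^n)
        + ((n * (2*n-1) : ℕ):ℝ) * (((2*n-1 : ℕ):ℝ) * (2 * T + 1))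
        ≤ 6 * n * ((n:ℝ) + 1)^(n+1) := by
      calc ((n * (2*n-1) : ℕ):ℝ) * (2 * (n:ℝ)^n)
          + ((n * (2*n-1) : ℕ):ℝ) * (((2*n-1 : ℕ):ℝ) * (2 * T + 1))
          = ((n * ((2*n-1) * (2*n^n + (2*n-1)*(1 + 2*(∑ j ∈ Finset.range n, n^j)))) : ℕ):ℝ) := by
            rw [hTnat]; push_cast; ring
        _ ≤ ((n * (6*(n+1)^(n+1)) : ℕ):ℝ) := Nat.cast_le.mpr h
        _ = 6 * n * ((n:ℝ) + 1)^(n+1) := by push_cast; ring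
    linarith [hA, hB]
  · rw [h1 i]
    congr 1
    exact PF.rep m hminj hmsurj (rr i) (h2 i)
  · exact PF.rep m hminj hmsurj _ (h4 i)
end

section
/- Let p ∈ ℂ[x] be a polynomial of degree n+1 ≥ 2 in x and q ∈ ℂ[y] a polynomial of degree m+1 ≥ 2 in y, and set H(x,y) = p(x) + q(y). Then for every pair (i,j) with 0 ≤ i ≤ n−1 and 0 ≤ j ≤ m−1 there exist polynomials u_{ij}, v_{ij} ∈ ℂ[x,y] and complex scalars A_{ij,kl}, B_{ij,kl} (0 ≤ k ≤ n−1, 0 ≤ l ≤ m−1) such that (p(x) + q(y))·x^i y^j = H_x·v_{ij} − H_y·u_{ij} + Σ_{k,l} A_{ij,kl}·x^k y^l and ∂v_{ij}/∂x − ∂u_{ij}/∂y = Σ_{k,l} B_{ij,kl}·x^k y^l. -/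
open MvPolynomial Finset


/-- Division step: for `i < n`, `p·xⁱ = p'·a + r` with `deg r < n` and
`deg a' < n`. -/
lemma stmt7_divstep (n : ℕ) (hn : 1 ≤ n) (p : Polynomial ℂ)
    (hp : p.natDegree = n + 1) (i : ℕ) (hi : i < n) :
    ∃ a r : Polynomial ℂ, p * Polynomial.X ^ i = p.derivative * a + r ∧
      r.natDegree < n ∧ a.derivative.natDegree < n := by
  have hp0 : p ≠ 0 := fun h => by simp [h] at hp
  have hdeg : p.derivative.degree = ((n : ℕ) : WithBot ℕ) := by
    have := Polynomial.degree_derivative_eq p (by omega)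
    simpa [hp] using this
  have hd' : p.derivative.natDegree = n :=
    Polynomial.natDegree_eq_of_degree_eq_some hdeg
  have hp'0 : p.derivative ≠ 0 := by
    intro h; rw [h] at hd'; simp at hd'; omega
  have hc : p.derivative.leadingCoeff ≠ 0 := by
    rwa [Polynomial.leadingCoeff_ne_zero]
  set M : Polynomial ℂ := p.derivative * Polynomial.C p.derivative.leadingCoeff⁻¹ with hM
  have hMmonic : M.Monic := Polynomial.monic_mul_leadingCoeff_inv hp'0
  have hMdeg : M.natDegree = n := by
    rw [hM, Polynomial.natDegree_mul hp'0 (by simp [hc, hp, hp0, Nat.cast_add_one_ne_zero]), hd', Polynomial.natDegree_C]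
    omega
  set f : Polynomial ℂ := p * Polynomial.X ^ i with hf
  have hfdeg : f.natDegree = n + 1 + i := by
    rw [hf, Polynomial.natDegree_mul hp0 (pow_ne_zero i Polynomial.X_ne_zero), hp,
      Polynomial.natDegree_X_pow]
  refine ⟨Polynomial.C p.derivative.leadingCoeff⁻¹ * (f /ₘ M), f %ₘ M, ?_, ?_, ?_⟩
  · have := Polynomial.modByMonic_add_div f M
    calc f = f %ₘ M + M * (f /ₘ M) := this.symm
    _ = p.derivative * (Polynomial.C p.derivative.leadingCoeff⁻¹ * (f /ₘ M)) + f %ₘ M := by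
        rw [hM]; ring
  · have hlt := Polynomial.natDegree_modByMonic_lt f hMmonic
      (fun h => by rw [h] at hMdeg; simp at hMdeg; omega)
    omega
  · have hq : (f /ₘ M).natDegree = i + 1 := by
      rw [Polynomial.natDegree_divByMonic f hMmonic, hfdeg, hMdeg]; omega
    have h1 : (Polynomial.C p.derivative.leadingCoeff⁻¹ * (f /ₘ M)).natDegree ≤ i + 1 := by
      calc (Polynomial.C p.derivative.leadingCoeff⁻¹ * (f /ₘ M)).natDegree
          ≤ (Polynomial.C p.derivative.leadingCoeff⁻¹).natDegree + (f /ₘ M).natDegree :=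
            Polynomial.natDegree_mul_le
      _ ≤ i + 1 := by rw [Polynomial.natDegree_C, hq, zero_add]
    have h2 := Polynomial.natDegree_derivative_le
      (Polynomial.C p.derivative.leadingCoeff⁻¹ * (f /ₘ M))
    omega

lemma stmt7_pderiv_aeval0 (f : Polynomial ℂ) :
    pderiv (0 : Fin 2) (Polynomial.aeval (X 0 : MvPolynomial (Fin 2) ℂ) f) =
      Polynomial.aeval (X 0 : MvPolynomial (Fin 2) ℂ) f.derivative := by
  induction f using Polynomial.induction_on' with
  | add p q hp hq => simp [hp, hq]
  | monomial k c =>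
    simp [Polynomial.aeval_monomial, Polynomial.derivative_monomial, pderiv_pow,
      map_mul, algebraMap_eq, mul_comm, mul_assoc, mul_left_comm]

lemma stmt7_pderiv_aeval1 (f : Polynomial ℂ) :
    pderiv (1 : Fin 2) (Polynomial.aeval (X 1 : MvPolynomial (Fin 2) ℂ) f) =
      Polynomial.aeval (X 1 : MvPolynomial (Fin 2) ℂ) f.derivative := by
  induction f using Polynomial.induction_on' with
  | add p q hp hq => simp [hp, hq]
  | monomial k c =>
    simp [Polynomial.aeval_monomial, Polynomial.derivative_monomial, pderiv_pow,
      map_mul, algebraMap_eq, mul_comm, mul_assoc, mul_left_comm]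

lemma stmt7_pderiv_aeval01 (f : Polynomial ℂ) :
    pderiv (0 : Fin 2) (Polynomial.aeval (X 1 : MvPolynomial (Fin 2) ℂ) f) = 0 := by
  induction f using Polynomial.induction_on' with
  | add p q hp hq => simp [hp, hq]
  | monomial k c =>
    simp [Polynomial.aeval_monomial, pderiv_pow, algebraMap_eq,
      pderiv_X_of_ne (show (1 : Fin 2) ≠ 0 by decide)]

lemma stmt7_pderiv_aeval10 (f : Polynomial ℂ) :
    pderiv (1 : Fin 2) (Polynomial.aeval (X 0 : MvPolynomial (Fin 2) ℂ) f) = 0 := by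
  induction f using Polynomial.induction_on' with
  | add p q hp hq => simp [hp, hq]
  | monomial k c =>
    simp [Polynomial.aeval_monomial, pderiv_pow, algebraMap_eq,
      pderiv_X_of_ne (show (0 : Fin 2) ≠ 1 by decide)]

lemma stmt7_expand0 {n m : ℕ} (r : Polynomial ℂ) (hr : r.natDegree < n) (j : Fin m) :
    (Polynomial.aeval (X 0 : MvPolynomial (Fin 2) ℂ) r) * X 1 ^ (j : ℕ) =
      ∑ k : Fin n, ∑ l : Fin m,
        (if l = j then r.coeff (k : ℕ) else 0) • ((X 0 : MvPolynomial (Fin 2) ℂ) ^ (k : ℕ) * X 1 ^ (l : ℕ)) := by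
  have hrhs : ∀ k : Fin n,
      (∑ l : Fin m, (if l = j then r.coeff (k : ℕ) else 0) •
        ((X 0 : MvPolynomial (Fin 2) ℂ) ^ (k : ℕ) * X 1 ^ (l : ℕ))) =
      r.coeff (k : ℕ) • ((X 0 : MvPolynomial (Fin 2) ℂ) ^ (k : ℕ) * X 1 ^ (j : ℕ)) := by
    intro k
    rw [show (∑ l : Fin m, (if l = j then r.coeff (k : ℕ) else 0) •
        ((X 0 : MvPolynomial (Fin 2) ℂ) ^ (k : ℕ) * X 1 ^ (l : ℕ))) =
      ∑ l : Fin m, (if l = j then r.coeff (k : ℕ) •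
        ((X 0 : MvPolynomial (Fin 2) ℂ) ^ (k : ℕ) * X 1 ^ (l : ℕ)) else 0) from
      Finset.sum_congr rfl (fun l _ => by split <;> simp)]
    simp
  simp_rw [hrhs]
  conv_lhs => rw [r.as_sum_range' n hr]
  rw [map_sum, Finset.sum_mul, ← Fin.sum_univ_eq_sum_range
    (fun k => Polynomial.aeval (X 0 : MvPolynomial (Fin 2) ℂ) ((Polynomial.monomial k) (r.coeff k)) * X 1 ^ (j : ℕ))]
  refine Finset.sum_congr rfl fun k _ => ?_
  simp [Polynomial.aeval_monomial, algebraMap_eq, smul_eq_C_mul, mul_assoc]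

lemma stmt7_expand1 {n m : ℕ} (s : Polynomial ℂ) (hs : s.natDegree < m) (i : Fin n) :
    (Polynomial.aeval (X 1 : MvPolynomial (Fin 2) ℂ) s) * X 0 ^ (i : ℕ) =
      ∑ k : Fin n, ∑ l : Fin m,
        (if k = i then s.coeff (l : ℕ) else 0) • ((X 0 : MvPolynomial (Fin 2) ℂ) ^ (k : ℕ) * X 1 ^ (l : ℕ)) := by
  have hrhs : (∑ k : Fin n, ∑ l : Fin m,
      (if k = i then s.coeff (l : ℕ) else 0) •
        ((X 0 : MvPolynomial (Fin 2) ℂ) ^ (k : ℕ) * X 1 ^ (l : ℕ))) =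
      ∑ l : Fin m, s.coeff (l : ℕ) • ((X 0 : MvPolynomial (Fin 2) ℂ) ^ (i : ℕ) * X 1 ^ (l : ℕ)) := by
    rw [show (∑ k : Fin n, ∑ l : Fin m,
      (if k = i then s.coeff (l : ℕ) else 0) •
        ((X 0 : MvPolynomial (Fin 2) ℂ) ^ (k : ℕ) * X 1 ^ (l : ℕ))) =
      ∑ k : Fin n, (if k = i then ∑ l : Fin m, s.coeff (l : ℕ) •
        ((X 0 : MvPolynomial (Fin 2) ℂ) ^ (k : ℕ) * X 1 ^ (l : ℕ)) else 0) from
      Finset.sum_congr rfl (fun k _ => by split <;> simp)]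
    simp
  rw [hrhs]
  conv_lhs => rw [s.as_sum_range' m hs]
  rw [map_sum, Finset.sum_mul, ← Fin.sum_univ_eq_sum_range
    (fun l => Polynomial.aeval (X 1 : MvPolynomial (Fin 2) ℂ) ((Polynomial.monomial l) (s.coeff l)) * X 0 ^ (i : ℕ))]
  refine Finset.sum_congr rfl fun l _ => ?_
  simp [Polynomial.aeval_monomial, algebraMap_eq, smul_eq_C_mul]
  ring

/-- doubly hyperelliptic Hamiltonians.  Let
`H(x,y) = p(x) + q(y)` with `deg p = n+1 ≥ 2`, `deg q = m+1 ≥ 2`.  Then for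
every pair `(i,j)`, `0 ≤ i ≤ n−1`, `0 ≤ j ≤ m−1`, there exist polynomials
`u_{ij}, v_{ij}` and scalars `A_{ij,kl}, B_{ij,kl}` (`0 ≤ k ≤ n−1`,
`0 ≤ l ≤ m−1`) such that
`H·xⁱyʲ = H_x·v_{ij} − H_y·u_{ij} + Σ_{k,l} A_{ij,kl}·x^k y^l` and
`∂v_{ij}/∂x − ∂u_{ij}/∂y = Σ_{k,l} B_{ij,kl}·x^k y^l`.  (These encode the
division `H·dω_{ij} = dH∧η_{ij} + Σ A_{ij,kl}·dω_{kl}` with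
`dη_{ij} = Σ B_{ij,kl}·dω_{kl}`, giving a Picard–Fuchs system of size `nm`.) -/
theorem stmt7 (n m : ℕ) (hn : 1 ≤ n) (hm : 1 ≤ m)
    (p q : Polynomial ℂ) (hp : p.natDegree = n + 1) (hq : q.natDegree = m + 1)
    (H : MvPolynomial (Fin 2) ℂ)
    (hH : H = Polynomial.aeval (X 0 : MvPolynomial (Fin 2) ℂ) p +
              Polynomial.aeval (X 1 : MvPolynomial (Fin 2) ℂ) q) :
    ∀ i : Fin n, ∀ j : Fin m,
      ∃ u v : MvPolynomial (Fin 2) ℂ, ∃ A B : Fin n → Fin m → ℂ,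
        (H * (X 0 ^ (i : ℕ) * X 1 ^ (j : ℕ)) =
          pderiv 0 H * v - pderiv 1 H * u +
            ∑ k : Fin n, ∑ l : Fin m, A k l • (X 0 ^ (k : ℕ) * X 1 ^ (l : ℕ))) ∧
        (pderiv 0 v - pderiv 1 u =
          ∑ k : Fin n, ∑ l : Fin m, B k l • (X 0 ^ (k : ℕ) * X 1 ^ (l : ℕ))) := by
  intro i j
  obtain ⟨a, r, har, hrn, hadn⟩ := stmt7_divstep n hn p hp i i.isLt
  obtain ⟨b, s, hbs, hsm, hbdm⟩ := stmt7_divstep m hm q hq j j.isLt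
  set φ0 : Polynomial ℂ →ₐ[ℂ] MvPolynomial (Fin 2) ℂ :=
    Polynomial.aeval (X 0 : MvPolynomial (Fin 2) ℂ) with hφ0
  set φ1 : Polynomial ℂ →ₐ[ℂ] MvPolynomial (Fin 2) ℂ :=
    Polynomial.aeval (X 1 : MvPolynomial (Fin 2) ℂ) with hφ1
  refine ⟨-(φ1 b * X 0 ^ (i : ℕ)), φ0 a * X 1 ^ (j : ℕ),
    (fun k l => (if l = j then r.coeff (k : ℕ) else 0) + (if k = i then s.coeff (l : ℕ) else 0)),
    (fun k l => (if l = j then a.derivative.coeff (k : ℕ) else 0) +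
      (if k = i then b.derivative.coeff (l : ℕ) else 0)), ?_, ?_⟩
  · have h1 : φ0 p * X 0 ^ (i : ℕ) = φ0 p.derivative * φ0 a + φ0 r := by
      have := congrArg φ0 har
      simpa [map_mul, map_add, map_pow, hφ0] using this
    have h2 : φ1 q * X 1 ^ (j : ℕ) = φ1 q.derivative * φ1 b + φ1 s := by
      have := congrArg φ1 hbs
      simpa [map_mul, map_add, map_pow, hφ1] using this
    have hpd0 : pderiv (0 : Fin 2) H = φ0 p.derivative := by
      rw [hH]
      simp [hφ0, hφ1, stmt7_pderiv_aeval0, stmt7_pderiv_aeval01]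
    have hpd1 : pderiv (1 : Fin 2) H = φ1 q.derivative := by
      rw [hH]
      simp [hφ0, hφ1, stmt7_pderiv_aeval1, stmt7_pderiv_aeval10]
    have hsum : (∑ k : Fin n, ∑ l : Fin m,
        ((if l = j then r.coeff (k : ℕ) else 0) + (if k = i then s.coeff (l : ℕ) else 0)) •
          ((X 0 : MvPolynomial (Fin 2) ℂ) ^ (k : ℕ) * X 1 ^ (l : ℕ))) =
        φ0 r * X 1 ^ (j : ℕ) + φ1 s * X 0 ^ (i : ℕ) := by
      simp_rw [add_smul, Finset.sum_add_distrib]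
      rw [← stmt7_expand0 r hrn j, ← stmt7_expand1 s hsm i]
    rw [hsum, hpd0, hpd1, hH]
    calc (φ0 p + φ1 q) * (X 0 ^ (i : ℕ) * X 1 ^ (j : ℕ))
        = (φ0 p * X 0 ^ (i : ℕ)) * X 1 ^ (j : ℕ) + (φ1 q * X 1 ^ (j : ℕ)) * X 0 ^ (i : ℕ) := by
          ring
      _ = (φ0 p.derivative * φ0 a + φ0 r) * X 1 ^ (j : ℕ) +
            (φ1 q.derivative * φ1 b + φ1 s) * X 0 ^ (i : ℕ) := by rw [h1, h2]
      _ = _ := by ring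
  · have hv : pderiv (0 : Fin 2) (φ0 a * X 1 ^ (j : ℕ)) =
        φ0 a.derivative * X 1 ^ (j : ℕ) := by
      rw [pderiv_mul, stmt7_pderiv_aeval0]
      simp [pderiv_pow, pderiv_X_of_ne (show (1 : Fin 2) ≠ 0 by decide), hφ0]
    have hu : pderiv (1 : Fin 2) (-(φ1 b * X 0 ^ (i : ℕ))) =
        -(φ1 b.derivative * X 0 ^ (i : ℕ)) := by
      rw [map_neg, pderiv_mul, stmt7_pderiv_aeval1]
      simp [pderiv_pow, pderiv_X_of_ne (show (0 : Fin 2) ≠ 1 by decide), hφ1]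
    rw [hv, hu, sub_neg_eq_add]
    simp_rw [add_smul, Finset.sum_add_distrib]
    rw [← stmt7_expand0 a.derivative hadn j, ← stmt7_expand1 b.derivative hbdm i]
end

section
/- Let n ≥ 1 and let Ĥ ∈ ℂ[x,y] be a homogeneous polynomial of degree n+1 such that the pair of partial derivatives (Ĥ_x, Ĥ_y) is normalized. Then at every point (x,y) ∈ ℂ² on the boundary of the unit bidisk, i.e. with |x| ≤ 1, |y| ≤ 1 and max(|x|,|y|) = 1, the gradient of Ĥ has Hermitian length at least 1: √(|Ĥ_x(x,y)|² + |Ĥ_y(x,y)|²) ≥ 1. -/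
open MvPolynomial Finset

lemma eval_le_l1mv (p : MvPolynomial (Fin 2) ℂ) (pt : Fin 2 → ℂ)
    (h : ∀ i, ‖pt i‖ ≤ 1) :
    ‖eval pt p‖ ≤ l1mv p := by
  rw [eval_eq]
  refine le_trans (norm_sum_le _ _) (Finset.sum_le_sum ?_)
  intro m _
  rw [norm_mul]
  refine mul_le_of_le_one_right (by positivity) ?_
  rw [norm_prod]
  refine Finset.prod_le_one (fun i _ => by positivity) (fun i _ => ?_)
  rw [norm_pow]
  exact pow_le_one₀ (by positivity) (h i)

lemma l1mv_X_pow (i : Fin 2) (k : ℕ) : l1mv ((X i : MvPolynomial (Fin 2) ℂ) ^ k) = 1 := by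
  unfold l1mv
  rw [MvPolynomial.X_pow_eq_monomial, support_monomial]
  simp [coeff_monomial]


set_option maxHeartbeats 1000000 in
/-- geometric consequence of quasimonicity.  If `Ĥ` is a
normalized (quasimonic) homogeneous polynomial of degree `n+1`, then everywhere
on the boundary of the unit bidisk (`|x| ≤ 1`, `|y| ≤ 1`, `max(|x|,|y|) = 1`)
the Hermitian length of the gradient `∇Ĥ` is at least `1`. -/
theorem stmt8 (n : ℕ) (hn : 1 ≤ n) (Hh : MvPolynomial (Fin 2) ℂ)
    (hhom : Hh.IsHomogeneous (n + 1))
    (hnorm : NormalizedPair n (pderiv 0 Hh) (pderiv 1 Hh))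
    (x y : ℂ) (hx : ‖x‖ ≤ 1) (hy : ‖y‖ ≤ 1)
    (hb : ‖x‖ = 1 ∨ ‖y‖ = 1) :
    1 ≤ Real.sqrt (‖eval ![x, y] (pderiv 0 Hh)‖ ^ 2 +
      ‖eval ![x, y] (pderiv 1 Hh)‖ ^ 2) := by
  obtain ⟨-, -, hN⟩ := hnorm
  set pt : Fin 2 → ℂ := ![x, y] with hpt
  have hpti : ∀ i, ‖pt i‖ ≤ 1 := by
    intro i; fin_cases i <;> simpa [hpt]
  set A := ‖eval pt (pderiv 0 Hh)‖ with hA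
  set B := ‖eval pt (pderiv 1 Hh)‖ with hB
  set M := Real.sqrt (A ^ 2 + B ^ 2) with hM
  have hM0 : 0 ≤ M := Real.sqrt_nonneg _
  have hAM : A ≤ M := by
    calc A = Real.sqrt (A ^ 2) := (Real.sqrt_sq (by positivity)).symm
    _ ≤ M := Real.sqrt_le_sqrt (by nlinarith [sq_nonneg B])
  have hBM : B ≤ M := by
    calc B = Real.sqrt (B ^ 2) := (Real.sqrt_sq (norm_nonneg _)).symm
    _ ≤ M := Real.sqrt_le_sqrt (le_add_of_nonneg_left (sq_nonneg A))
  obtain ⟨i, hi⟩ : ∃ i : Fin 2, ‖pt i‖ = 1 := by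
    rcases hb with h | h
    exacts [⟨0, by simpa [hpt] using h⟩, ⟨1, by simpa [hpt] using h⟩]
  have hfhom : ((X i : MvPolynomial (Fin 2) ℂ) ^ (2 * n - 1)).IsHomogeneous (2 * n - 1) := by
    simpa using (isHomogeneous_X ℂ i).pow (2 * n - 1)
  obtain ⟨u, v, -, -, hf, hl⟩ := hN _ hfhom
  have h1 : ‖eval pt ((X i : MvPolynomial (Fin 2) ℂ) ^ (2 * n - 1))‖ = 1 := by
    rw [map_pow, eval_X, norm_pow, hi, one_pow]
  calc (1 : ℝ) = ‖eval pt ((X i : MvPolynomial (Fin 2) ℂ) ^ (2 * n - 1))‖ := h1.symm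
  _ = ‖eval pt (pderiv 0 Hh) * eval pt u + eval pt (pderiv 1 Hh) * eval pt v‖ := by
      rw [hf, map_add, map_mul, map_mul]
  _ ≤ A * ‖eval pt u‖ + B * ‖eval pt v‖ := by
      refine (norm_add_le _ _).trans ?_
      rw [norm_mul, norm_mul]
  _ ≤ M * l1mv u + M * l1mv v :=
      add_le_add (mul_le_mul hAM (eval_le_l1mv u pt hpti) (norm_nonneg _) hM0)
        (mul_le_mul hBM (eval_le_l1mv v pt hpti) (norm_nonneg _) hM0)
  _ = M * (l1mv u + l1mv v) := (mul_add M _ _).symm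
  _ ≤ M * l1mv ((X i : MvPolynomial (Fin 2) ℂ) ^ (2 * n - 1)) :=
      mul_le_mul_of_nonneg_left hl hM0
  _ = M := by rw [l1mv_X_pow, mul_one]
end

section
/- Let p ∈ ℂ[x] be a polynomial of degree n+1 ≥ 2 whose only critical value is 0, i.e. p(z) = 0 for every z ∈ ℂ with p′(z) = 0. Then p is a translated monomial: there exist α, a ∈ ℂ with p(x) = α·(x − a)^{n+1}. -/
open Polynomial

/-- Chademan's lemma.  A complex polynomial of degree
`n+1 ≥ 2` whose only critical value is `0` (i.e. `p(z) = 0` whenever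
`p′(z) = 0`) is a translated monomial: `p(x) = α(x − a)^{n+1}`. -/
theorem stmt14 (n : ℕ) (hn : 1 ≤ n) (p : Polynomial ℂ)
    (hdeg : p.natDegree = n + 1)
    (hcrit : ∀ z : ℂ, (derivative p).eval z = 0 → p.eval z = 0) :
    ∃ α a : ℂ, p = C α * (X - C a) ^ (n + 1) := by
  have hp0 : p ≠ 0 := fun h => by simp [h] at hdeg
  have hdd : (derivative p).natDegree = n := by
    have := degree_derivative_eq p (by omega)
    rw [hdeg] at this
    exact natDegree_eq_of_degree_eq_some (by simpa using this)
  have hd0 : derivative p ≠ 0 := by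
    intro h
    have := natDegree_eq_zero_of_derivative_eq_zero h
    omega
  have hcard : p.roots.card = n + 1 := by
    rw [← hdeg]
    exact splits_iff_card_roots.mp (IsAlgClosed.splits p)
  have hcard' : (derivative p).roots.card = n := by
    rw [← hdd]
    exact splits_iff_card_roots.mp (IsAlgClosed.splits _)
  set S := p.roots.toFinset with hS
  have hsub : (derivative p).roots.toFinset ⊆ S := by
    intro z hz
    rw [Multiset.mem_toFinset, mem_roots hd0] at hz
    rw [hS, Multiset.mem_toFinset, mem_roots hp0]
    exact hcrit z hz
  have hsum : ∑ a ∈ S, (derivative p).roots.count a = n := by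
    rw [← hcard', ← Multiset.toFinset_sum_count_eq]
    exact (Finset.sum_subset hsub (fun x _ hx =>
      Multiset.count_eq_zero.mpr (fun h => hx (Multiset.mem_toFinset.mpr h)))).symm
  have hcount : ∀ a ∈ S, (derivative p).roots.count a = p.roots.count a - 1 := by
    intro a ha
    rw [hS, Multiset.mem_toFinset, mem_roots hp0] at ha
    rw [count_roots, count_roots, derivative_rootMultiplicity_of_root ha]
  have hpos : ∀ a ∈ S, 1 ≤ p.roots.count a := by
    intro a ha
    rw [hS, Multiset.mem_toFinset] at ha
    exact Multiset.one_le_count_iff_mem.mpr ha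
  have hsum2 : ∑ a ∈ S, p.roots.count a = n + 1 := by
    rw [← hcard, ← Multiset.toFinset_sum_count_eq]
  have hScard : S.card = 1 := by
    have h1 : ∑ a ∈ S, (p.roots.count a - 1) + S.card = n + 1 := by
      rw [Finset.card_eq_sum_ones, ← Finset.sum_add_distrib, ← hsum2]
      exact Finset.sum_congr rfl (fun a ha => by have := hpos a ha; omega)
    rw [Finset.sum_congr rfl hcount] at hsum
    omega
  obtain ⟨a, ha⟩ := Finset.card_eq_one.mp hScard
  have hroots : p.roots = Multiset.replicate (n + 1) a := by
    rw [Multiset.eq_replicate]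
    refine ⟨hcard, fun b hb => ?_⟩
    have : b ∈ S := Multiset.mem_toFinset.mpr hb
    rw [ha, Finset.mem_singleton] at this
    exact this
  refine ⟨p.leadingCoeff, a, ?_⟩
  have := Splits.eq_prod_roots (IsAlgClosed.splits p)
  rw [hroots] at this
  simpa [Multiset.map_replicate, Multiset.prod_replicate, pow_succ'] using this
end

section
/- For every n ≥ 1 there exists a finite constant C_n, depending only on n, with the following property: if p(x) = x^{n+1} + p_{n−1}x^{n−1} + ⋯ + p_1 x + p_0 is a monic complex polynomial of degree n+1 with zero coefficient of x^n, all of whose critical values lie in the closed unit disk (i.e. |p(z)| ≤ 1 for every z ∈ ℂ with p′(z) = 0), then |p_{n−1}| + ⋯ + |p_1| + |p_0| ≤ C_n. -/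
open Polynomial Finset Filter Topology

noncomputable def Pp (n : ℕ) (d : Fin n → ℂ) : Polynomial ℂ :=
  X ^ (n+1) + ∑ i : Fin n, C (d i) * X ^ (i : ℕ)

lemma evalPp (n : ℕ) (d : Fin n → ℂ) (z : ℂ) :
    (Pp n d).eval z = z^(n+1) + ∑ i : Fin n, d i * z^(i:ℕ) := by
  simp [Pp, eval_finset_sum]

lemma evalPp' (n : ℕ) (d : Fin n → ℂ) (z : ℂ) :
    (derivative (Pp n d)).eval z
      = (n+1) * z^n + ∑ i : Fin n, d i * (i:ℕ) * z^((i:ℕ)-1) := by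
  simp [Pp, derivative_X_pow, eval_finset_sum, mul_assoc]

lemma sum_deg_le (n : ℕ) (d : Fin n → ℂ) :
    (∑ i : Fin n, C (d i) * X ^ (i : ℕ) : Polynomial ℂ).degree ≤ (n : WithBot ℕ) := by
  refine (degree_sum_le _ _).trans ?_
  refine Finset.sup_le fun i _ => ?_
  refine (degree_C_mul_X_pow_le _ _).trans ?_
  exact_mod_cast WithBot.coe_le_coe.2 (le_of_lt i.2)

lemma monicPp (n : ℕ) (d : Fin n → ℂ) : (Pp n d).Monic := by
  refine monic_X_pow_add ?_
  exact lt_of_le_of_lt (sum_deg_le n d) (by exact_mod_cast Nat.lt_succ_self n)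

lemma natDegreePp (n : ℕ) (d : Fin n → ℂ) : (Pp n d).natDegree = n + 1 := by
  have := monicPp n d
  have h : (Pp n d).degree = (n+1 : ℕ) := by
    rw [Pp, degree_add_eq_left_of_degree_lt, degree_X_pow]
    rw [degree_X_pow]
    exact lt_of_le_of_lt (sum_deg_le n d) (by exact_mod_cast Nat.lt_succ_self n)
  exact natDegree_eq_of_degree_eq_some h

lemma coeffPp_top (n : ℕ) (d : Fin n → ℂ) : (Pp n d).coeff (n+1) = 1 := by
  have := (monicPp n d).leadingCoeff
  rwa [leadingCoeff, natDegreePp] at this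

lemma coeff_derivPp (n : ℕ) (d : Fin n → ℂ) :
    (derivative (Pp n d)).coeff n = (n+1 : ℂ) := by
  rw [coeff_derivative, coeffPp_top]
  push_cast; ring

lemma natDegree_derivPp (n : ℕ) (d : Fin n → ℂ) :
    (derivative (Pp n d)).natDegree = n := by
  refine le_antisymm ?_ ?_
  · have := natDegree_derivative_le (Pp n d)
    rwa [natDegreePp] at this
  · refine le_natDegree_of_ne_zero ?_
    rw [coeff_derivPp]
    exact_mod_cast (Nat.cast_add_one_ne_zero n : (↑n + 1 : ℂ) ≠ 0)

lemma derivPp_ne_zero (n : ℕ) (d : Fin n → ℂ) : derivative (Pp n d) ≠ 0 := by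
  intro h
  have := coeff_derivPp n d
  rw [h] at this
  simp at this
  exact Nat.cast_add_one_ne_zero n this.symm

lemma leadingCoeff_derivPp (n : ℕ) (d : Fin n → ℂ) :
    (derivative (Pp n d)).leadingCoeff = (n+1 : ℂ) := by
  rw [leadingCoeff, natDegree_derivPp, coeff_derivPp]

lemma card_roots_derivPp (n : ℕ) (d : Fin n → ℂ) :
    Multiset.card (derivative (Pp n d)).roots = n := by
  have h := splits_iff_card_roots.1 (IsAlgClosed.splits
    (derivative (Pp n d)))
  rw [h, natDegree_derivPp]

lemma coeff_n_Pp (n : ℕ) (d : Fin n → ℂ) : (Pp n d).coeff n = 0 := by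
  rw [Pp, coeff_add, coeff_X_pow, if_neg (Nat.succ_ne_self n).symm, finset_sum_coeff]
  rw [Finset.sum_eq_zero, zero_add]
  intro i _
  rw [coeff_C_mul, coeff_X_pow, if_neg (Nat.ne_of_lt i.2).symm, mul_zero]

lemma rigidity (n : ℕ) (hn : 1 ≤ n) (d : Fin n → ℂ)
    (h : ∀ z, (derivative (Pp n d)).eval z = 0 → (Pp n d).eval z = 0) :
    d = 0 := by
  set q := Pp n d with hq
  set D := derivative q with hD
  have hqm : q.Monic := monicPp n d
  have hq0 : q ≠ 0 := hqm.ne_zero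
  have hD0 : D ≠ 0 := derivPp_ne_zero n d
  have hcard : Multiset.card D.roots = n := card_roots_derivPp n d
  set S := D.roots.toFinset with hS
  -- each element of S is a root of q with multiplicity count+1
  have hcount : ∀ ζ ∈ S, q.roots.count ζ = D.roots.count ζ + 1 := by
    intro ζ hζ
    have hDr : D.IsRoot ζ := (mem_roots hD0).1 (Multiset.mem_toFinset.1 hζ)
    have hqr : q.IsRoot ζ := h ζ hDr
    have hmul := derivative_rootMultiplicity_of_root hqr
    rw [count_roots, count_roots, hD, hmul]
    have : 1 ≤ q.rootMultiplicity ζ := (rootMultiplicity_pos hq0).2 hqr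
    omega
  -- counting: n + S.card ≤ n + 1
  have hsum : ∑ ζ ∈ S, D.roots.count ζ = n := by
    rw [hS, Multiset.toFinset_sum_count_eq, hcard]
  have hsumq : ∑ ζ ∈ S, q.roots.count ζ ≤ n + 1 := by
    have hsub : S ⊆ q.roots.toFinset := by
      intro ζ hζ
      refine Multiset.mem_toFinset.2 ((mem_roots hq0).2 ?_)
      exact h ζ ((mem_roots hD0).1 (Multiset.mem_toFinset.1 hζ))
    calc ∑ ζ ∈ S, q.roots.count ζ ≤ ∑ ζ ∈ q.roots.toFinset, q.roots.count ζ :=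
          Finset.sum_le_sum_of_subset hsub
      _ = Multiset.card q.roots := Multiset.toFinset_sum_count_eq _
      _ ≤ q.natDegree := q.card_roots'
      _ = n + 1 := natDegreePp n d
  have hScard : S.card ≤ 1 := by
    have : ∑ ζ ∈ S, q.roots.count ζ = n + S.card := by
      rw [Finset.sum_congr rfl hcount, Finset.sum_add_distrib, hsum,
        Finset.sum_const, smul_eq_mul, mul_one]
    omega
  have hSne : S.Nonempty := by
    have : D.roots ≠ 0 := by
      intro h0
      rw [h0] at hcard; simp at hcard; omega
    obtain ⟨ζ, hζ⟩ := Multiset.exists_mem_of_ne_zero this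
    exact ⟨ζ, Multiset.mem_toFinset.2 hζ⟩
  obtain ⟨ζ, hζS⟩ := hSne
  -- D.roots = replicate n ζ
  have hrep : D.roots = Multiset.replicate n ζ := by
    have hall : ∀ b ∈ D.roots, b = ζ := by
      intro b hb
      have hbS : b ∈ S := Multiset.mem_toFinset.2 hb
      have : S = {ζ} := Finset.eq_singleton_iff_unique_mem.2
        ⟨hζS, fun x hx => by
          by_contra hne
          have : 2 ≤ S.card := Finset.one_lt_card.2 ⟨x, hx, ζ, hζS, hne⟩
          omega⟩
      have := this ▸ hbS
      simpa using this
    rw [← hcard]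
    exact (Multiset.eq_replicate_card).2 hall
  -- D = C(n+1) (X - C ζ)^n
  have hDfact : D = C ((n:ℂ)+1) * (X - C ζ) ^ n := by
    have := (IsAlgClosed.splits D).eq_prod_roots
    rw [hrep, leadingCoeff_derivPp] at this
    simpa [Multiset.map_replicate, Multiset.prod_replicate] using this
  -- q = (X - C ζ)^(n+1)
  have hqζ : q.eval ζ = 0 := h ζ ((mem_roots hD0).1 (Multiset.mem_toFinset.1 hζS))
  have hres : q = (X - C ζ) ^ (n+1) := by
    have hder : derivative (q - (X - C ζ) ^ (n+1)) = 0 := by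
      rw [derivative_sub, derivative_pow, ← hD, hDfact]
      simp
    have hconst := eq_C_of_natDegree_eq_zero (natDegree_eq_zero_of_derivative_eq_zero hder)
    have hev : (q - (X - C ζ) ^ (n+1)).eval ζ = 0 := by
      simp [eval_sub, hqζ]
    rw [hconst] at hev
    simp at hev
    have hc0 : (q - (X - C ζ) ^ (n+1)).coeff 0 = 0 := by rw [coeff_sub]; exact hev
    rw [hc0, C_0] at hconst
    exact sub_eq_zero.1 hconst
  -- ζ = 0 from coeff n
  have hζ0 : ζ = 0 := by
    have h1 : q.coeff n = 0 := coeff_n_Pp n d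
    have h2 : q.nextCoeff = q.coeff n := by
      rw [nextCoeff_of_natDegree_pos (by rw [natDegreePp]; omega), natDegreePp]
      simp
    have h3 : q.nextCoeff = (n+1 : ℕ) • (X - C ζ).nextCoeff := by
      rw [hres, Monic.nextCoeff_pow (monic_X_sub_C ζ)]
    rw [h2, h1, nextCoeff_X_sub_C] at h3
    have : ((n+1 : ℕ) : ℂ) * (-ζ) = 0 := by
      have := h3.symm
      rwa [nsmul_eq_mul] at this
    rcases mul_eq_zero.1 this with h | h
    · exfalso
      push_cast at h
      exact Nat.cast_add_one_ne_zero n h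
    · exact neg_eq_zero.1 h
  rw [hζ0] at hres
  simp only [C_0, sub_zero] at hres
  have hsum0 : (∑ i : Fin n, C (d i) * X ^ (i:ℕ) : Polynomial ℂ) = 0 := by
    have h' : X ^ (n+1) + (∑ i : Fin n, C (d i) * X ^ (i:ℕ) : Polynomial ℂ) = X ^ (n+1) := by
      rw [← Pp]; exact hres
    exact (add_eq_left).1 h'
  funext i
  have hco := congrArg (fun p => Polynomial.coeff p (i:ℕ)) hsum0
  simp only [finset_sum_coeff, coeff_C_mul, coeff_X_pow, coeff_zero] at hco
  rw [Finset.sum_eq_single i] at hco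
  · simpa using hco
  · intro j _ hji
    rw [if_neg, mul_zero]
    exact fun hv => hji (Fin.ext hv.symm)
  · intro hi; exact absurd (Finset.mem_univ i) hi

lemma exists_pow_card_le_prod (R : Multiset ℝ) (hR : R ≠ 0) (h0 : ∀ x ∈ R, 0 ≤ x) :
    ∃ x ∈ R, x ^ (Multiset.card R) ≤ R.prod := by
  induction R using Multiset.induction_on with
  | empty => exact absurd rfl hR
  | cons a S ih =>
    rcases eq_or_ne S 0 with h | h
    · subst h
      exact ⟨a, Multiset.mem_cons_self a 0, by simp⟩
    · obtain ⟨y, hyS, hy⟩ := ih h (fun x hx => h0 x (Multiset.mem_cons_of_mem hx))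
      have ha : 0 ≤ a := h0 a (Multiset.mem_cons_self a S)
      have hy0 : 0 ≤ y := h0 y (Multiset.mem_cons_of_mem hyS)
      have hS0 : 0 ≤ S.prod := Multiset.prod_nonneg
        (fun x hx => h0 x (Multiset.mem_cons_of_mem hx))
      rcases le_total a y with hay | hya
      · refine ⟨a, Multiset.mem_cons_self a S, ?_⟩
        rw [Multiset.card_cons, Multiset.prod_cons, pow_succ']
        exact mul_le_mul le_rfl ((pow_le_pow_left₀ ha hay _).trans hy) (pow_nonneg ha _) ha
      · refine ⟨y, Multiset.mem_cons_of_mem hyS, ?_⟩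
        rw [Multiset.card_cons, Multiset.prod_cons, pow_succ']
        exact mul_le_mul hya hy (pow_nonneg hy0 _) ha

lemma scale_eval (n : ℕ) (c : Fin n → ℂ) (s : ℂ) (hs : s ≠ 0) (z : ℂ) :
    (Pp n (fun i => c i * s ^ (n+1-(i:ℕ)))).eval z = s^(n+1) * (Pp n c).eval (z / s) := by
  rw [evalPp, evalPp, mul_add, Finset.mul_sum]
  congr 1
  · rw [div_pow]
    field_simp
  · refine Finset.sum_congr rfl fun i _ => ?_
    have hle : (i:ℕ) ≤ n + 1 := le_of_lt (Nat.lt_succ_of_lt i.2)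
    rw [div_pow, ← pow_sub_mul_pow s hle]
    field_simp

lemma scale_eval_deriv (n : ℕ) (c : Fin n → ℂ) (s : ℂ) (hs : s ≠ 0) (z : ℂ) :
    (derivative (Pp n (fun i => c i * s ^ (n+1-(i:ℕ))))).eval z
      = s^n * (derivative (Pp n c)).eval (z / s) := by
  rw [evalPp', evalPp', mul_add, Finset.mul_sum]
  congr 1
  · rw [div_pow]
    field_simp
  · refine Finset.sum_congr rfl fun i _ => ?_
    rcases Nat.eq_zero_or_pos (i:ℕ) with h0 | hpos
    · rw [h0]; simp
    · have hle : (i:ℕ) - 1 ≤ n := by omega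
      have hexp : n - ((i:ℕ) - 1) = n + 1 - (i:ℕ) := by omega
      rw [div_pow, ← pow_sub_mul_pow s hle, hexp]
      field_simp

lemma exists_root_near (n : ℕ) (hn : 1 ≤ n) (d : Fin n → ℂ) (z : ℂ) :
    ∃ r : ℂ, (derivative (Pp n d)).eval r = 0 ∧
      ‖z - r‖ ^ n ≤ ‖(derivative (Pp n d)).eval z‖ / (n+1) := by
  set D := derivative (Pp n d) with hD
  have hD0 : D ≠ 0 := derivPp_ne_zero n d
  have hev := Splits.eval_eq_prod_roots
    (IsAlgClosed.splits D) z
  rw [leadingCoeff_derivPp] at hev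
  set R := D.roots.map (fun a => ‖z - a‖) with hR
  have hcardR : Multiset.card R = n := by
    rw [hR, Multiset.card_map, card_roots_derivPp]
  have hRne : R ≠ 0 := by
    intro h0
    rw [h0] at hcardR; simp at hcardR; omega
  obtain ⟨x, hxR, hx⟩ := exists_pow_card_le_prod R hRne (by
    intro x hx
    obtain ⟨a, _, ha⟩ := Multiset.mem_map.1 hx
    rw [← ha]; exact norm_nonneg _)
  rw [hcardR] at hx
  obtain ⟨r, hrR, hrx⟩ := Multiset.mem_map.1 hxR
  refine ⟨r, (mem_roots hD0).1 hrR, ?_⟩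
  have hprod : ‖D.eval z‖ = (n+1) * R.prod := by
    rw [hev, norm_mul, show ‖(Multiset.map (fun x => z - x) D.roots).prod‖ = ((Multiset.map (fun x => z - x) D.roots).map (‖·‖)).prod from map_multiset_prod (normHom (α := ℂ)) _]
    congr 1
    · rw [show ((n:ℂ)+1) = ((n+1:ℕ):ℂ) by push_cast; ring, Complex.norm_natCast]
      push_cast; ring
    · rw [hR, Multiset.map_map]; rfl
  rw [hprod, mul_comm, mul_div_assoc, div_self (by positivity), mul_one, hrx]
  exact hx

open Filter Topology in
lemma tendsto_of_pow_tendsto (k : ℕ) (hk : 1 ≤ k) (x : ℕ → ℝ) (hx : ∀ m, 0 ≤ x m)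
    (h : Tendsto (fun m => x m ^ k) atTop (𝓝 0)) : Tendsto x atTop (𝓝 0) := by
  rw [Metric.tendsto_atTop] at h ⊢
  intro ε hε
  set ε' := min ε 1 with hε'
  have hε'pos : 0 < ε' := lt_min hε one_pos
  obtain ⟨N, hN⟩ := h (ε' ^ k) (pow_pos hε'pos k)
  refine ⟨N, fun m hm => ?_⟩
  have := hN m hm
  rw [Real.dist_eq, sub_zero, abs_of_nonneg (pow_nonneg (hx m) k)] at this
  rw [Real.dist_eq, sub_zero, abs_of_nonneg (hx m)]
  by_contra hcon
  push_neg at hcon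
  have hle : ε' ≤ x m := le_trans (min_le_left _ _) hcon
  exact absurd this (not_lt.2 (pow_le_pow_left₀ hε'pos.le hle k))

open Filter Topology in
lemma tendsto_evalPp_deriv (n : ℕ) (u : ℕ → Fin n → ℂ) (dl : Fin n → ℂ)
    (hu : ∀ i, Tendsto (fun m => u m i) atTop (𝓝 (dl i))) (z : ℂ) :
    Tendsto (fun m => (derivative (Pp n (u m))).eval z) atTop
      (𝓝 ((derivative (Pp n dl)).eval z)) := by
  simp only [evalPp']
  exact tendsto_const_nhds.add (tendsto_finset_sum _ fun i _ =>
    ((hu i).mul_const _).mul_const _)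

open Filter Topology in
lemma tendsto_evalPp (n : ℕ) (u : ℕ → Fin n → ℂ) (dl : Fin n → ℂ)
    (hu : ∀ i, Tendsto (fun m => u m i) atTop (𝓝 (dl i)))
    (r : ℕ → ℂ) (z : ℂ) (hr : Tendsto r atTop (𝓝 z)) :
    Tendsto (fun m => (Pp n (u m)).eval (r m)) atTop (𝓝 ((Pp n dl).eval z)) := by
  simp only [evalPp]
  exact (hr.pow _).add (tendsto_finset_sum _ fun i _ => (hu i).mul (hr.pow _))

open Filter Topology in
lemma limit_crit_vanish (n : ℕ) (hn : 1 ≤ n) (u : ℕ → Fin n → ℂ) (dl : Fin n → ℂ)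
    (hu : ∀ i, Tendsto (fun m => u m i) atTop (𝓝 (dl i)))
    (ε : ℕ → ℝ) (hε : Tendsto ε atTop (𝓝 0))
    (hcrit : ∀ m z, (derivative (Pp n (u m))).eval z = 0 →
       ‖(Pp n (u m)).eval z‖ ≤ ε m) :
    ∀ z, (derivative (Pp n dl)).eval z = 0 → (Pp n dl).eval z = 0 := by
  intro z hz
  choose r hr1 hr2 using fun m => exists_root_near n hn (u m) z
  have ha : Tendsto (fun m => (derivative (Pp n (u m))).eval z) atTop (𝓝 0) := by
    have := tendsto_evalPp_deriv n u dl hu z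
    rwa [hz] at this
  have habs : Tendsto (fun m => ‖(derivative (Pp n (u m))).eval z‖ / ((n:ℝ)+1))
      atTop (𝓝 0) := by
    have h1 : Tendsto (fun m => ‖(derivative (Pp n (u m))).eval z‖) atTop (𝓝 0) := by
      have := (continuous_norm.tendsto 0).comp ha
      simpa [Function.comp_def] using this
    simpa using h1.div_const ((n:ℝ)+1)
  have hxz : Tendsto (fun m => ‖z - r m‖) atTop (𝓝 0) := by
    apply tendsto_of_pow_tendsto n hn _ (fun m => norm_nonneg _)
    exact squeeze_zero (fun m => pow_nonneg (norm_nonneg _) _) hr2 habs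
  have hrz : Tendsto r atTop (𝓝 z) := by
    rw [tendsto_iff_dist_tendsto_zero]
    have : ∀ m, dist (r m) z = ‖z - r m‖ := by
      intro m
      rw [Complex.dist_eq, norm_sub_rev]
    simpa [this] using hxz
  have hev : Tendsto (fun m => ‖(Pp n (u m)).eval (r m)‖) atTop
      (𝓝 (‖(Pp n dl).eval z‖)) :=
    (continuous_norm.tendsto _).comp (tendsto_evalPp n u dl hu r z hrz)
  have hle : ‖(Pp n dl).eval z‖ ≤ 0 := by
    refine le_of_tendsto_of_tendsto hev hε ?_
    exact Filter.Eventually.of_forall fun m => hcrit m (r m) (hr1 m)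
  exact norm_eq_zero.1 (le_antisymm hle (norm_nonneg _))

/-- Chademan's corollary.  For every `n ≥ 1` there is a
finite constant `Cₙ` such that any monic polynomial
`p = x^{n+1} + p_{n-1}x^{n-1} + ⋯ + p₀` of degree `n+1` without the `xⁿ` term,
all of whose critical values lie in the closed unit disk, satisfies
`|p_{n-1}| + ⋯ + |p₀| ≤ Cₙ`. -/
theorem stmt15 (n : ℕ) (hn : 1 ≤ n) :
    ∃ Cn : ℝ, ∀ c : Fin n → ℂ,
      (∀ z : ℂ,
        (derivative (X ^ (n + 1) + ∑ i : Fin n, C (c i) * X ^ (i : ℕ))).eval z = 0 →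
        ‖(X ^ (n + 1) + ∑ i : Fin n, C (c i) * X ^ (i : ℕ)).eval z‖ ≤ 1) →
      ∑ i : Fin n, ‖c i‖ ≤ Cn := by
  by_contra hcon
  push_neg at hcon
  choose cc h1 h2 using fun m : ℕ => hcon ((m : ℝ) + 1)
  -- rescale each polynomial
  have hIVT : ∀ m : ℕ, ∃ s : ℝ, 0 < s ∧ s ≤ 1 ∧
      ∑ i : Fin n, ‖cc m i‖ * s^(n+1-(i:ℕ)) = 1 := by
    intro m
    set g : ℝ → ℝ := fun t => ∑ i : Fin n, ‖cc m i‖ * t^(n+1-(i:ℕ)) with hg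
    have hgc : Continuous g := by
      apply continuous_finset_sum
      intro i _
      exact continuous_const.mul (continuous_pow _)
    have hg0 : g 0 = 0 := by
      rw [hg]
      refine Finset.sum_eq_zero fun i _ => ?_
      rw [zero_pow (by omega : n+1-(i:ℕ) ≠ 0), mul_zero]
    have hg1 : 1 ≤ g 1 := by
      rw [hg]
      simp only [one_pow, mul_one]
      have := h2 m
      have h0 : (0:ℝ) ≤ (m:ℝ) := Nat.cast_nonneg m
      linarith
    have hm : (1:ℝ) ∈ Set.Icc (g 0) (g 1) := ⟨by rw [hg0]; norm_num, hg1⟩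
    obtain ⟨s, hs01, hgs⟩ := intermediate_value_Icc (zero_le_one) hgc.continuousOn hm
    refine ⟨s, ?_, hs01.2, hgs⟩
    rcases lt_or_eq_of_le hs01.1 with h | h
    · exact h
    · exfalso; rw [← h, hg0] at hgs; norm_num at hgs
  choose s hs0 hs1 hsum using hIVT
  set u : ℕ → Fin n → ℂ := fun m i => cc m i * ((s m : ℂ))^(n+1-(i:ℕ)) with hu
  have habs_u : ∀ m i, ‖u m i‖ = ‖cc m i‖ * (s m)^(n+1-(i:ℕ)) := by
    intro m i
    rw [hu]
    simp only [norm_mul, norm_pow, Complex.norm_real, Real.norm_eq_abs, abs_of_nonneg (hs0 m).le]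
  have hsum1 : ∀ m, ∑ i : Fin n, ‖u m i‖ = 1 := by
    intro m
    rw [Finset.sum_congr rfl fun i _ => habs_u m i]
    exact hsum m
  -- critical values of rescaled polys are small
  set ε : ℕ → ℝ := fun m => (s m)^(n+1) with hε
  have hcrit : ∀ m z, (derivative (Pp n (u m))).eval z = 0 →
      ‖(Pp n (u m)).eval z‖ ≤ ε m := by
    intro m z hz
    have hsne : ((s m : ℂ)) ≠ 0 := by
      exact_mod_cast (hs0 m).ne'
    have h1' : ∀ w : ℂ, (derivative (Pp n (cc m))).eval w = 0 →
        ‖(Pp n (cc m)).eval w‖ ≤ 1 := h1 m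
    rw [scale_eval_deriv n (cc m) _ hsne z] at hz
    have hz' : (derivative (Pp n (cc m))).eval (z / (s m : ℂ)) = 0 := by
      rcases mul_eq_zero.1 hz with h | h
      · exact absurd h (pow_ne_zero _ hsne)
      · exact h
    have := h1' _ hz'
    rw [scale_eval n (cc m) _ hsne z, norm_mul]
    calc ‖((s m : ℂ))^(n+1)‖ * ‖(Pp n (cc m)).eval (z / (s m : ℂ))‖
        ≤ ‖((s m : ℂ))^(n+1)‖ * 1 :=
          mul_le_mul_of_nonneg_left this (norm_nonneg _)
      _ = ε m := by
          rw [mul_one, norm_pow, Complex.norm_real, Real.norm_eq_abs, abs_of_nonneg (hs0 m).le]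
  -- ε → 0
  have hεle : ∀ m, ε m ≤ 1 / ((m:ℝ) + 1) := by
    intro m
    have hkey : ((m:ℝ)+1) * (s m)^(n+1) ≤ 1 := by
      have hterm : ∀ i : Fin n, ‖cc m i‖ * (s m)^(n+1)
          ≤ ‖cc m i‖ * (s m)^(n+1-(i:ℕ)) := by
        intro i
        refine mul_le_mul_of_nonneg_left ?_ (norm_nonneg _)
        exact pow_le_pow_of_le_one (hs0 m).le (hs1 m) (by omega)
      have hsums : (∑ i : Fin n, ‖cc m i‖) * (s m)^(n+1) ≤ 1 := by
        rw [Finset.sum_mul]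
        rw [← hsum m]
        exact Finset.sum_le_sum fun i _ => hterm i
      have h2m := h2 m
      have hps : 0 < (s m)^(n+1) := pow_pos (hs0 m) _
      nlinarith
    rw [hε]
    rw [le_div_iff₀ (show (0:ℝ) < (m:ℝ)+1 by positivity)]
    linarith [hkey]
  have hεt : Tendsto ε atTop (𝓝 0) := by
    refine squeeze_zero (fun m => pow_nonneg (hs0 m).le _) hεle ?_
    exact tendsto_one_div_add_atTop_nhds_zero_nat
  -- compactness
  have hball : ∀ m, u m ∈ Metric.closedBall (0 : Fin n → ℂ) 1 := by
    intro m
    rw [mem_closedBall_zero_iff]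
    refine (pi_norm_le_iff_of_nonneg zero_le_one).2 fun i => ?_
    rw [← hsum1 m]
    exact Finset.single_le_sum (f := fun j => ‖u m j‖)
      (fun j _ => norm_nonneg _) (Finset.mem_univ i)
  obtain ⟨dl, _, φ, hφ, hconv⟩ :=
    (isCompact_closedBall (0 : Fin n → ℂ) 1).tendsto_subseq hball
  have hui : ∀ i, Tendsto (fun m => u (φ m) i) atTop (𝓝 (dl i)) :=
    fun i => ((continuous_apply i).tendsto dl).comp hconv
  have hvan := limit_crit_vanish n hn (fun m => u (φ m)) dl hui (fun m => ε (φ m))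
    (hεt.comp hφ.tendsto_atTop) (fun m z hz => hcrit (φ m) z hz)
  have hdl0 : dl = 0 := rigidity n hn dl hvan
  -- contradiction with ∑ |dl i| = 1
  have hlim : Tendsto (fun m => ∑ i : Fin n, ‖u (φ m) i‖) atTop
      (𝓝 (∑ i : Fin n, ‖dl i‖)) :=
    tendsto_finset_sum _ fun i _ => (continuous_norm.tendsto _).comp (hui i)
  have hone : (∑ i : Fin n, ‖dl i‖) = 1 := by
    refine tendsto_nhds_unique ?_ hlim |>.symm
    simpa [hsum1] using (tendsto_const_nhds : Tendsto (fun _ : ℕ => (1:ℝ)) atTop (𝓝 1))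
  rw [hdl0] at hone
  simp at hone
end
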